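/- arXiv:math/0606287 — 8 statements merged into one kernel-verified Lean document; each statement's English description precedes it below -/
import Mathlib

section
/- For every integer k ≥ 1, every real α ≠ 0, and every x ∈ (0,1], the integral of (t₁^α + t₂^α + ⋯ + t_k^α)/(t₁t₂⋯t_k) over the simplex {1 ≥ t₁ ≥ ⋯ ≥ t_k ≥ x} equals ((-ln x)^{k-1}/(k-1)!) · (1 - x^α)/α. -/
/-!
Both the integrand and the cube `[x, 1]^k` are invariant under permutations of the coordinates,
and the `k!` images of the simplex `1 ≥ t₁ ≥ ⋯ ≥ t_k ≥ x` under these permutations cover the cube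
and overlap only where two coordinates coincide, a null set. Hence the simplex integral is `1/k!`
times the cube integral. On the cube the `i`-th term of the integrand factors as
`t_i^(α-1) ∏_{j ≠ i} t_j⁻¹`, so by Fubini the cube integral is
`k (∫_x^1 y^(α-1) dy) (∫_x^1 y⁻¹ dy)^(k-1) = k ((1 - x^α)/α) (-log x)^(k-1)`.
-/

open MeasureTheory Set

theorem volume_setOf_apply_eq_apply {ι : Type*} [Fintype ι] {i j : ι} (hij : i ≠ j) :
    volume {t : ι → ℝ | t i = t j} = 0 := by
  classical
  let L : (ι → ℝ) →ₗ[ℝ] ℝ := LinearMap.proj (R := ℝ) (φ := fun _ : ι ↦ ℝ) i - LinearMap.proj j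
  have hL : {t : ι → ℝ | t i = t j} = LinearMap.ker L := by
    ext t
    simp [L, sub_eq_zero]
  rw [hL]
  refine Measure.addHaar_submodule _ _ fun htop ↦ ?_
  have : Pi.single i 1 ∈ LinearMap.ker L := htop ▸ Submodule.mem_top
  simp [L, hij.symm] at this

theorem volume_setOf_not_injective {ι : Type*} [Fintype ι] :
    volume {t : ι → ℝ | ¬ Function.Injective t} = 0 := by
  have : {t : ι → ℝ | ¬ Function.Injective t} ⊆ ⋃ (i) (j) (_ : i ≠ j), {t | t i = t j} := by
    intro t ht
    simp only [Function.Injective, not_forall] at ht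
    obtain ⟨i, j, hij, hne⟩ := ht
    exact mem_iUnion₂.2 ⟨i, j, mem_iUnion.2 ⟨hne, hij⟩⟩
  exact measure_mono_null this <| measure_iUnion_null fun i ↦ measure_iUnion_null fun j ↦
    measure_iUnion_null volume_setOf_apply_eq_apply

theorem setIntegral_comp_perm {ι E : Type*} [Fintype ι] [NormedAddCommGroup E] [NormedSpace ℝ E]
    (σ : Equiv.Perm ι) (f : (ι → ℝ) → E) (s : Set (ι → ℝ)) :
    ∫ t in (· ∘ σ) ⁻¹' s, f (t ∘ σ) = ∫ t in s, f t := by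
  have h := volume_measurePreserving_piCongrLeft (fun _ : ι ↦ ℝ) σ.symm
  have he : ⇑(MeasurableEquiv.piCongrLeft (fun _ : ι ↦ ℝ) σ.symm) = (· ∘ σ) := by
    ext t i
    simp [MeasurableEquiv.coe_piCongrLeft, Equiv.piCongrLeft_apply_eq_cast]
  have := h.setIntegral_preimage_emb (MeasurableEquiv.measurableEmbedding _) f s
  rwa [he] at this

theorem preimage_comp_perm_univ_pi_const {ι α : Type*} (σ : Equiv.Perm ι) (s : Set α) :
    (· ∘ σ) ⁻¹' univ.pi (fun _ : ι ↦ s) = univ.pi fun _ ↦ s := by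
  ext t
  simp only [mem_preimage, mem_univ_pi, Function.comp_apply]
  exact σ.forall_congr_right (q := (t · ∈ s))

section Symmetrization

variable {k : ℕ}

theorem measurableSet_setOf_antitone_comp (σ : Equiv.Perm (Fin k)) :
    MeasurableSet {t : Fin k → ℝ | Antitone (t ∘ σ)} := by
  have : Continuous fun t : Fin k → ℝ ↦ t ∘ σ := by fun_prop
  exact (isClosed_antitone.preimage this).measurableSet

theorem iUnion_setOf_antitone_comp :
    ⋃ σ : Equiv.Perm (Fin k), {t : Fin k → ℝ | Antitone (t ∘ σ)} = univ :=
  eq_univ_of_forall fun t ↦ mem_iUnion.2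
    ⟨Tuple.sort (OrderDual.toDual ∘ t), monotone_toDual_comp_iff.1 (Tuple.monotone_sort _)⟩

theorem aedisjoint_setOf_antitone_comp {σ τ : Equiv.Perm (Fin k)} (hστ : σ ≠ τ) :
    AEDisjoint volume {t : Fin k → ℝ | Antitone (t ∘ σ)} {t | Antitone (t ∘ τ)} := by
  refine measure_mono_null ?_ volume_setOf_not_injective
  rintro t ⟨hσ, hτ⟩ ht
  exact hστ <| Equiv.coe_fn_injective (ht.comp_left (Tuple.unique_antitone hσ hτ))

theorem setIntegral_eq_factorial_smul_setIntegral_antitone {E : Type*} [NormedAddCommGroup E]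
    [NormedSpace ℝ E] {C : Set (Fin k → ℝ)} (hC : MeasurableSet C)
    (hCσ : ∀ σ : Equiv.Perm (Fin k), (· ∘ σ) ⁻¹' C = C) {f : (Fin k → ℝ) → E}
    (hf : ∀ (σ : Equiv.Perm (Fin k)) t, f (t ∘ σ) = f t) (hfC : IntegrableOn f C) :
    ∫ t in C, f t = k.factorial • ∫ t in {t | Antitone t} ∩ C, f t := by
  have hA : ∀ σ : Equiv.Perm (Fin k),
      ∫ t in {t | Antitone (t ∘ σ)} ∩ C, f t = ∫ t in {t | Antitone t} ∩ C, f t := fun σ ↦ by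
    conv_rhs => rw [← setIntegral_comp_perm σ, preimage_inter, hCσ]
    simp only [hf]
    rfl
  calc ∫ t in C, f t = ∫ t in ⋃ σ : Equiv.Perm (Fin k), {t | Antitone (t ∘ σ)} ∩ C, f t := by
        rw [← iUnion_inter, iUnion_setOf_antitone_comp, univ_inter]
    _ = ∑ σ : Equiv.Perm (Fin k), ∫ t in {t | Antitone (t ∘ σ)} ∩ C, f t := by
        rw [integral_iUnion_ae, tsum_fintype]
        · exact fun σ ↦ ((measurableSet_setOf_antitone_comp σ).inter hC).nullMeasurableSet
        · exact fun σ τ hστ ↦ (aedisjoint_setOf_antitone_comp hστ).mono inter_subset_left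
            inter_subset_left
        · rwa [← iUnion_inter, iUnion_setOf_antitone_comp, univ_inter]
    _ = k.factorial • ∫ t in {t | Antitone t} ∩ C, f t := by
        simp [hA, Fintype.card_perm]

end Symmetrization

theorem setIntegral_univ_pi_prod {ι 𝕜 : Type*} [Fintype ι] [RCLike 𝕜] {E : ι → Type*}
    [∀ i, MeasureSpace (E i)] [∀ i, SigmaFinite (volume : Measure (E i))]
    (s : ∀ i, Set (E i)) (f : ∀ i, E i → 𝕜) :
    ∫ x in univ.pi s, ∏ i, f i (x i) = ∏ i, ∫ y in s i, f i y := by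
  rw [volume_pi, Measure.restrict_pi_pi]
  exact integral_fintype_prod_eq_prod f

theorem integrableOn_univ_pi_prod {ι 𝕜 E : Type*} [Fintype ι] [RCLike 𝕜]
    [MeasureSpace E] [SigmaFinite (volume : Measure E)]
    (s : ι → Set E) {f : ι → E → 𝕜} (hf : ∀ i, IntegrableOn (f i) (s i)) :
    IntegrableOn (fun x : ι → E ↦ ∏ i, f i (x i)) (univ.pi s) := by
  rw [IntegrableOn, volume_pi, Measure.restrict_pi_pi]
  exact Integrable.fintype_prod hf

section Cube

variable {ι : Type*} [Fintype ι] {s : Set ℝ} {α : ℝ}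

theorem eqOn_univ_pi_sum_rpow_div_prod [DecidableEq ι] (hs0 : s ⊆ Ioi 0) :
    EqOn (fun t : ι → ℝ ↦ (∑ i, t i ^ α) / ∏ i, t i)
      (fun t ↦ ∑ i, ∏ j, if j = i then t j ^ (α - 1) else (t j)⁻¹) (univ.pi fun _ ↦ s) := by
  intro t ht
  have ht0 (j : ι) : 0 < t j := hs0 (ht j trivial)
  have hfactor (i j : ι) : (if j = i then t j ^ (α - 1) else (t j)⁻¹)
      = (if j = i then t j ^ α else 1) * (t j)⁻¹ := by
    split_ifs
    · rw [Real.rpow_sub_one (ht0 j).ne', div_eq_mul_inv]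
    · rw [one_mul]
  simp only [hfactor, Finset.prod_mul_distrib, Finset.prod_ite_eq', Finset.mem_univ, if_true,
    Finset.prod_inv_distrib, ← Finset.sum_mul, div_eq_mul_inv]

theorem integrableOn_univ_pi_prod_ite [DecidableEq ι] (hrpow : IntegrableOn (· ^ (α - 1)) s)
    (hinv : IntegrableOn (·⁻¹) s) (i : ι) :
    IntegrableOn (fun t : ι → ℝ ↦ ∏ j, if j = i then t j ^ (α - 1) else (t j)⁻¹)
      (univ.pi fun _ ↦ s) :=
  integrableOn_univ_pi_prod (f := fun j y ↦ if j = i then y ^ (α - 1) else y⁻¹) _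
    fun j ↦ by by_cases h : j = i <;> simp [h, hrpow, hinv]

theorem integrableOn_univ_pi_sum_rpow_div_prod (hs : MeasurableSet s) (hs0 : s ⊆ Ioi 0)
    (hrpow : IntegrableOn (· ^ (α - 1)) s) (hinv : IntegrableOn (·⁻¹) s) :
    IntegrableOn (fun t : ι → ℝ ↦ (∑ i, t i ^ α) / ∏ i, t i) (univ.pi fun _ ↦ s) := by
  classical
  rw [integrableOn_congr_fun (eqOn_univ_pi_sum_rpow_div_prod hs0) (.univ_pi fun _ ↦ hs)]
  exact integrable_finsetSum _ fun i _ ↦ integrableOn_univ_pi_prod_ite hrpow hinv i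

theorem setIntegral_univ_pi_sum_rpow_div_prod (hs : MeasurableSet s) (hs0 : s ⊆ Ioi 0)
    (hrpow : IntegrableOn (· ^ (α - 1)) s) (hinv : IntegrableOn (·⁻¹) s) :
    ∫ t in univ.pi (fun _ : ι ↦ s), (∑ i, t i ^ α) / ∏ i, t i
      = Fintype.card ι * ((∫ y in s, y ^ (α - 1)) * (∫ y in s, y⁻¹) ^ (Fintype.card ι - 1)) := by
  classical
  have hterm (i : ι) :
      ∫ t in univ.pi (fun _ : ι ↦ s), ∏ j, (if j = i then t j ^ (α - 1) else (t j)⁻¹)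
        = (∫ y in s, y ^ (α - 1)) * (∫ y in s, y⁻¹) ^ (Fintype.card ι - 1) := by
    rw [setIntegral_univ_pi_prod (f := fun j y ↦ if j = i then y ^ (α - 1) else y⁻¹),
      Fintype.prod_eq_mul_prod_compl i,
      Finset.prod_congr (g := fun _ ↦ ∫ y in s, y⁻¹) rfl fun j hj ↦ by simp_all]
    simp [Finset.card_compl]
  rw [setIntegral_congr_fun (.univ_pi fun _ ↦ hs) (eqOn_univ_pi_sum_rpow_div_prod hs0),
    integral_finsetSum _ fun i _ ↦ integrableOn_univ_pi_prod_ite hrpow hinv i]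
  simp [hterm]

end Cube

theorem integral_Icc_rpow_sub_one {a b α : ℝ} (hα : α ≠ 0) (ha : 0 < a) (hab : a ≤ b) :
    ∫ y in Icc a b, y ^ (α - 1) = (b ^ α - a ^ α) / α := by
  have h0 : (0 : ℝ) ∉ uIcc a b := notMem_uIcc_of_lt ha (ha.trans_le hab)
  have hα' : α - 1 ≠ -1 := by rwa [Ne, sub_eq_neg_self]
  rw [integral_Icc_eq_integral_Ioc, ← intervalIntegral.integral_of_le hab,
    integral_rpow (Or.inr ⟨hα', h0⟩), sub_add_cancel]

theorem integral_Icc_inv {a b : ℝ} (ha : 0 < a) (hab : a ≤ b) :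
    ∫ y in Icc a b, y⁻¹ = Real.log (b / a) := by
  rw [integral_Icc_eq_integral_Ioc, ← intervalIntegral.integral_of_le hab,
    integral_inv_of_pos ha (ha.trans_le hab)]

theorem simplex_integral_sum_rpow (k : ℕ) (hk : 1 ≤ k) (α : ℝ) (hα : α ≠ 0)
    (x : ℝ) (hx : x ∈ Set.Ioc (0:ℝ) 1) :
    ∫ t in {t : Fin k → ℝ | Antitone t ∧ (∀ i, t i ≤ 1) ∧ ∀ i, x ≤ t i},
      (∑ i, t i ^ α) / ∏ i, t i ∂volume
      = (-Real.log x) ^ (k - 1) / (Nat.factorial (k - 1)) * ((1 - x ^ α) / α) := by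
  obtain ⟨hx0, hx1⟩ := hx
  have hpos : Icc x 1 ⊆ Ioi 0 := fun y hy ↦ hx0.trans_le hy.1
  have hrpow : IntegrableOn (· ^ (α - 1)) (Icc x 1) :=
    (continuousOn_id.rpow_const fun y hy ↦ .inl (hpos hy).ne').integrableOn_Icc
  have hinv : IntegrableOn (·⁻¹) (Icc x 1) :=
    (continuousOn_inv₀.mono fun y hy ↦ (hpos hy).ne').integrableOn_Icc
  have hregion : {t : Fin k → ℝ | Antitone t ∧ (∀ i, t i ≤ 1) ∧ ∀ i, x ≤ t i}
      = {t | Antitone t} ∩ univ.pi fun _ ↦ Icc x 1 := by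
    ext t
    simp only [mem_ofPred_eq, mem_inter_iff, mem_univ_pi, mem_Icc, forall_and]
    tauto
  have hsymm := setIntegral_eq_factorial_smul_setIntegral_antitone
    (C := univ.pi fun _ : Fin k ↦ Icc x 1) (.univ_pi fun _ ↦ measurableSet_Icc)
    (fun σ ↦ preimage_comp_perm_univ_pi_const σ _)
    (fun σ t ↦ by simp only [Function.comp_apply, Equiv.sum_comp σ (t · ^ α), Equiv.prod_comp])
    (integrableOn_univ_pi_sum_rpow_div_prod measurableSet_Icc hpos hrpow hinv)
  rw [setIntegral_univ_pi_sum_rpow_div_prod measurableSet_Icc hpos hrpow hinv,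
    integral_Icc_rpow_sub_one hα hx0 hx1, integral_Icc_inv hx0 hx1] at hsymm
  rw [Fintype.card_fin, Real.one_rpow, one_div, Real.log_inv, nsmul_eq_mul,
    ← Nat.mul_factorial_pred (by omega : k ≠ 0), Nat.cast_mul, mul_assoc,
    mul_right_inj' (Nat.cast_ne_zero.2 (by omega))] at hsymm
  rw [hregion, div_mul_eq_mul_div, mul_comm (_ ^ _), hsymm]
  field_simp
end

section
/- Let k ≥ 1 and let u₁, …, u_{k+1} be pairwise distinct real numbers, and x ∈ (0,1]. Then the integral of t₁^{u₁-u₂-1} t₂^{u₂-u₃-1} ⋯ t_k^{u_k-u_{k+1}-1} over the simplex {1 ≥ t₁ ≥ ⋯ ≥ t_k ≥ x} equals the sum over i = 1,…,k+1 of x^{u_i - u_{k+1}} / ∏_{j ≠ i} (u_j - u_i). -/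
/-!
Integrate out the smallest coordinate first. With `a = u_k - u_{k+1}`,
`∫_x^{t_{k-1}} t^(a-1) dt = (t_{k-1}^a - x^a) / a`; the factor `t_{k-1}^a` merges into the weight of
`t_{k-1}`, so the `k`-fold integral is `(I' - x^a I'') / a`, where `I'` and `I''` are the
`(k-1)`-fold integrals with `u_k`, respectively `u_{k+1}`, deleted. The partial-fraction sums on the
right-hand side obey the same recursion: it is the recurrence for divided differences.
-/

open MeasureTheory Finset

/-- Up to the sign `(-1) ^ (#s - 1)`, the divided difference of `f` at the nodes `u` over `s`. -/
noncomputable def lagrangeSum {ι : Type*} [DecidableEq ι] (s : Finset ι) (u f : ι → ℝ) : ℝ :=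
  ∑ i ∈ s, f i / ∏ j ∈ s.erase i, (u j - u i)

section lagrangeSum

variable {ι : Type*} [DecidableEq ι] {s : Finset ι} {u : ι → ℝ}

lemma prod_erase_sub_ne_zero (hu : Set.InjOn u s) {t : Finset ι} (hts : t ⊆ s) {i : ι}
    (hi : i ∈ s) : ∏ j ∈ t.erase i, (u j - u i) ≠ 0 :=
  prod_ne_zero_iff.2 fun _ hj => sub_ne_zero.2 fun h =>
    (mem_erase.1 hj).1 (hu (hts (mem_of_mem_erase hj)) hi h)

lemma prod_erase_sub_eq_mul {i r : ι} (hr : r ∈ s) (hri : r ≠ i) :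
    ∏ j ∈ s.erase i, (u j - u i) = (u r - u i) * ∏ j ∈ (s.erase r).erase i, (u j - u i) := by
  rw [erase_right_comm, mul_prod_erase _ (fun j => u j - u i) (mem_erase.2 ⟨hri, hr⟩)]

lemma sub_mul_lagrangeSum (hu : Set.InjOn u s) (f : ι → ℝ)
    {p q : ι} (hp : p ∈ s) (hq : q ∈ s) (hpq : p ≠ q) :
    (u p - u q) * lagrangeSum s u f =
      lagrangeSum (s.erase p) u f - lagrangeSum (s.erase q) u f := by
  -- termwise, because `u p - u q = (u p - u i) - (u q - u i)`
  have termwise : ∀ i ∈ s, (u p - u q) * (f i / ∏ j ∈ s.erase i, (u j - u i)) =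
      (if i ≠ p then f i / ∏ j ∈ (s.erase p).erase i, (u j - u i) else 0) -
      (if i ≠ q then f i / ∏ j ∈ (s.erase q).erase i, (u j - u i) else 0) := by
    intro i hi
    have hsub : ∀ {r}, r ∈ s → r ≠ i → u r - u i ≠ 0 := fun hr hri =>
      sub_ne_zero.2 (hu.ne hr hi hri)
    have hprod : ∀ {t}, t ⊆ s → ∏ j ∈ t.erase i, (u j - u i) ≠ 0 := fun ht =>
      prod_erase_sub_ne_zero hu ht hi
    obtain rfl | hip := eq_or_ne i p
    · have := hprod (erase_subset q s)
      rw [prod_erase_sub_eq_mul hq hpq.symm, if_neg (not_not.2 rfl), if_pos hpq]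
      field_simp [hsub hq hpq.symm]
      ring
    obtain rfl | hiq := eq_or_ne i q
    · have := hprod (erase_subset p s)
      rw [prod_erase_sub_eq_mul hp hpq, if_pos hpq.symm, if_neg (not_not.2 rfl), sub_zero]
      field_simp [hsub hp hpq]
    have := hprod ((erase_subset q _).trans (erase_subset p s))
    rw [prod_erase_sub_eq_mul hp hip.symm, if_pos hip, if_pos hiq,
      prod_erase_sub_eq_mul (mem_erase.2 ⟨hpq.symm, hq⟩) hiq.symm,
      prod_erase_sub_eq_mul (mem_erase.2 ⟨hpq, hp⟩) hip.symm,
      erase_right_comm (s := s) (a := q) (b := p)]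
    field_simp [hsub hp hip.symm, hsub hq hiq.symm]
    ring
  simp only [lagrangeSum, mul_sum, sum_congr rfl termwise, sum_sub_distrib, ← sum_filter,
    filter_ne']

lemma lagrangeSum_image {κ : Type*} [DecidableEq κ] {e : κ → ι} (he : Function.Injective e)
    (t : Finset κ) (u f : ι → ℝ) :
    lagrangeSum (t.image e) u f = lagrangeSum t (u ∘ e) (f ∘ e) := by
  rw [lagrangeSum, sum_image he.injOn]
  refine sum_congr rfl fun i _ => ?_
  rw [← image_erase he, prod_image he.injOn]
  rfl

lemma lagrangeSum_const_mul (s : Finset ι) (u f : ι → ℝ) (c : ℝ) :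
    lagrangeSum s u (fun i => c * f i) = c * lagrangeSum s u f := by
  simp only [lagrangeSum, mul_sum, mul_div_assoc]

end lagrangeSum

def simplex (k : ℕ) (x : ℝ) : Set (Fin k → ℝ) :=
  {t | Antitone t ∧ (∀ i, t i ≤ 1) ∧ ∀ i, x ≤ t i}

def lastOrOne : {k : ℕ} → (Fin k → ℝ) → ℝ
  | 0, _ => 1
  | _ + 1, s => s (Fin.last _)

section simplex

variable {k : ℕ} {x : ℝ}

lemma simplex_eq_inter_Icc : simplex k x = {t | Antitone t} ∩ Set.Icc (fun _ => x) 1 := by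
  ext t
  simp only [simplex, Set.mem_ofPred_eq, Set.mem_inter_iff, Set.mem_Icc, Pi.le_def, Pi.one_apply]
  tauto

lemma isCompact_simplex : IsCompact (simplex k x) := by
  rw [simplex_eq_inter_Icc]
  exact isCompact_Icc.inter_left isClosed_antitone

lemma snoc_mem_simplex_iff {s : Fin k → ℝ} {y : ℝ} :
    Fin.snoc s y ∈ simplex (k + 1) x ↔ s ∈ simplex k x ∧ y ∈ Set.Icc x (lastOrOne s) := by
  cases k with
  | zero =>
    simp [simplex, lastOrOne, Fin.snoc_zero, Subsingleton.antitone, and_comm]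
  | succ m =>
    have hanti : Antitone (Fin.snoc s y : Fin (m + 2) → ℝ) ↔ Antitone s ∧ y ≤ s (Fin.last m) := by
      simp only [Fin.antitone_iff_succ_le (n := m + 1), Fin.antitone_iff_succ_le (n := m),
        Fin.forall_fin_succ' (n := m), Fin.succ_castSucc, Fin.snoc_castSucc, Fin.succ_last,
        Fin.snoc_last]
    simp only [simplex, Set.mem_ofPred_eq, hanti, Fin.forall_fin_succ' (n := m + 1),
      Fin.snoc_castSucc, Fin.snoc_last, lastOrOne, Set.mem_Icc]
    constructor
    · tauto
    · rintro ⟨⟨hs, h1, hx⟩, hxy, hy⟩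
      exact ⟨⟨hs, hy⟩, ⟨h1, hy.trans (h1 _)⟩, hx, hxy⟩

lemma le_lastOrOne (hx : x ≤ 1) {s : Fin k → ℝ} (hs : s ∈ simplex k x) : x ≤ lastOrOne s := by
  cases k with
  | zero => exact hx
  | succ m => exact hs.2.2 _

lemma measurableSet_simplex : MeasurableSet (simplex k x) :=
  isCompact_simplex.isClosed.measurableSet

lemma setIntegral_simplex_succ {f : (Fin (k + 1) → ℝ) → ℝ}
    (hf : IntegrableOn f (simplex (k + 1) x)) :
    ∫ t in simplex (k + 1) x, f t =
      ∫ s in simplex k x, ∫ y in Set.Icc x (lastOrOne s), f (Fin.snoc s y) := by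
  set e := MeasurableEquiv.piFinSuccAbove (fun _ : Fin (k + 1) => ℝ) (Fin.last k)
  have he : MeasurePreserving e.symm := (volume_preserving_piFinSuccAbove _ _).symm
  have he_symm : ∀ p : ℝ × (Fin k → ℝ), e.symm p = Fin.snoc p.2 p.1 := fun p =>
    Fin.insertNth_last' _ _
  have hg := (integrable_indicator_iff measurableSet_simplex).2 hf
  rw [← integral_indicator measurableSet_simplex,
    ← he.integral_comp e.symm.measurableEmbedding, Measure.volume_eq_prod,
    integral_prod_symm (fun p => (simplex (k + 1) x).indicator f (e.symm p))
      ((he.integrable_comp_emb e.symm.measurableEmbedding).2 hg),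
    ← integral_indicator measurableSet_simplex]
  congr 1 with s
  by_cases hs : s ∈ simplex k x
  · rw [Set.indicator_of_mem hs, ← integral_indicator measurableSet_Icc]
    congr 1 with y
    simp [Set.indicator, he_symm, snoc_mem_simplex_iff, hs]
  · simp [Set.indicator, he_symm, snoc_mem_simplex_iff, hs]

end simplex

noncomputable def simplexWeight {k : ℕ} (u : Fin (k + 1) → ℝ) (t : Fin k → ℝ) : ℝ :=
  ∏ i : Fin k, t i ^ (u i.castSucc - u i.succ - 1)

section simplexWeight

variable {k : ℕ}

lemma integrableOn_simplexWeight (u : Fin (k + 1) → ℝ) {x : ℝ} (hx : 0 < x) :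
    IntegrableOn (simplexWeight u) (simplex k x) := by
  refine ContinuousOn.integrableOn_compact isCompact_simplex
    (continuousOn_finsetProd _ fun i _ => continuousOn_of_forall_continuousAt fun t ht => ?_)
  exact (continuousAt_apply i t).rpow_const (Or.inl (hx.trans_le (ht.2.2 i)).ne')

lemma simplexWeight_snoc (u : Fin (k + 2) → ℝ) (s : Fin k → ℝ) (y : ℝ) :
    simplexWeight u (Fin.snoc s y) =
      simplexWeight (u ∘ Fin.castSucc) s *
        y ^ (u (Fin.last k).castSucc - u (Fin.last (k + 1)) - 1) := by
  simp [simplexWeight, Fin.prod_univ_castSucc]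

lemma lastOrOne_rpow_mul_simplexWeight (u : Fin (k + 2) → ℝ) {s : Fin k → ℝ}
    (hs : 0 < lastOrOne s) :
    lastOrOne s ^ (u (Fin.last k).castSucc - u (Fin.last (k + 1))) *
        simplexWeight (u ∘ Fin.castSucc) s =
      simplexWeight (u ∘ (Fin.last k).castSucc.succAbove) s := by
  cases k with
  | zero => simp [lastOrOne, simplexWeight]
  | succ m =>
    have hcast : (Fin.last (m + 1)).castSucc.succAbove ∘ Fin.castSucc =
        (Fin.castSucc ∘ Fin.castSucc : Fin (m + 1) → Fin (m + 3)) := by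
      funext j
      exact Fin.succAbove_castSucc_of_lt _ _ (Fin.castSucc_lt_last j)
    rw [← Fin.snoc_init_self s, simplexWeight_snoc, simplexWeight_snoc,
      Function.comp_assoc u (Fin.last (m + 1)).castSucc.succAbove, hcast]
    simp only [lastOrOne, Fin.snoc_last] at hs ⊢
    simp only [Function.comp_apply, Fin.succAbove_castSucc_self, Fin.succ_last,
      Fin.succAbove_castSucc_of_lt _ _ (Fin.castSucc_lt_last (Fin.last m))]
    rw [mul_left_comm, ← Real.rpow_add hs]
    congr 2
    ring

end simplexWeight

lemma setIntegral_Icc_rpow_sub_one {x c a : ℝ} (hx : 0 < x) (hxc : x ≤ c) (ha : a ≠ 0) :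
    ∫ y in Set.Icc x c, y ^ (a - 1) = (c ^ a - x ^ a) / a := by
  rw [integral_Icc_eq_integral_Ioc, ← intervalIntegral.integral_of_le hxc,
    integral_rpow (Or.inr ⟨by simpa [sub_eq_iff_eq_add] using ha, ?_⟩)]
  · simp
  · rw [Set.uIcc_of_le hxc]
    exact fun h => hx.not_ge h.1

lemma setIntegral_simplexWeight_succ {k : ℕ} (u : Fin (k + 2) → ℝ) {x : ℝ} (hx : 0 < x)
    (hx1 : x ≤ 1) (hu : u (Fin.last k).castSucc ≠ u (Fin.last (k + 1))) :
    ∫ t in simplex (k + 1) x, simplexWeight u t =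
      ((∫ s in simplex k x, simplexWeight (u ∘ (Fin.last k).castSucc.succAbove) s) -
        x ^ (u (Fin.last k).castSucc - u (Fin.last (k + 1))) *
          ∫ s in simplex k x, simplexWeight (u ∘ Fin.castSucc) s) /
        (u (Fin.last k).castSucc - u (Fin.last (k + 1))) := by
  have ha := sub_ne_zero.2 hu
  have inner : ∀ s ∈ simplex k x,
      ∫ y in Set.Icc x (lastOrOne s), simplexWeight u (Fin.snoc s y) =
        (simplexWeight (u ∘ (Fin.last k).castSucc.succAbove) s -
          x ^ (u (Fin.last k).castSucc - u (Fin.last (k + 1))) *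
            simplexWeight (u ∘ Fin.castSucc) s) /
          (u (Fin.last k).castSucc - u (Fin.last (k + 1))) := by
    intro s hs
    have hxs := le_lastOrOne hx1 hs
    simp_rw [simplexWeight_snoc, integral_const_mul, setIntegral_Icc_rpow_sub_one hx hxs ha,
      ← lastOrOne_rpow_mul_simplexWeight u (hx.trans_le hxs)]
    ring
  rw [setIntegral_simplex_succ (integrableOn_simplexWeight u hx),
    setIntegral_congr_fun measurableSet_simplex inner, integral_div,
    integral_sub (integrableOn_simplexWeight _ hx) ((integrableOn_simplexWeight _ hx).const_mul _),
    integral_const_mul]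

lemma sub_mul_lagrangeSum_rpow {k : ℕ} (u : Fin (k + 2) → ℝ) (hu : Function.Injective u)
    {x : ℝ} (hx : 0 < x) :
    (u (Fin.last k).castSucc - u (Fin.last (k + 1))) *
        lagrangeSum univ u (fun i => x ^ (u i - u (Fin.last (k + 1)))) =
      lagrangeSum univ (u ∘ (Fin.last k).castSucc.succAbove)
          (fun i => x ^ ((u ∘ (Fin.last k).castSucc.succAbove) i -
            (u ∘ (Fin.last k).castSucc.succAbove) (Fin.last k))) -
        x ^ (u (Fin.last k).castSucc - u (Fin.last (k + 1))) *
          lagrangeSum univ (u ∘ Fin.castSucc)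
            (fun i => x ^ ((u ∘ Fin.castSucc) i - (u ∘ Fin.castSucc) (Fin.last k))) := by
  rw [sub_mul_lagrangeSum hu.injOn _ (mem_univ _) (mem_univ _) (Fin.castSucc_lt_last _).ne,
    ← compl_singleton, ← compl_singleton, ← Fin.image_succAbove_univ, ← Fin.image_castSucc,
    lagrangeSum_image Fin.succAbove_right_injective, lagrangeSum_image (Fin.castSucc_injective _),
    ← lagrangeSum_const_mul]
  congr 2 with i
  · simp
  · simp only [Function.comp_apply, ← Real.rpow_add hx]
    ring_nf

theorem setIntegral_simplexWeight {k : ℕ} (u : Fin (k + 1) → ℝ) (hu : Function.Injective u)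
    {x : ℝ} (hx : 0 < x) (hx1 : x ≤ 1) :
    ∫ t in simplex k x, simplexWeight u t =
      lagrangeSum univ u (fun i => x ^ (u i - u (Fin.last k))) := by
  induction k with
  | zero =>
    have h_univ : simplex 0 x = Set.univ := Set.eq_univ_of_forall fun t =>
      ⟨Subsingleton.antitone t, finZeroElim, finZeroElim⟩
    simp [h_univ, simplexWeight, lagrangeSum, volume_pi, measureReal_def]
  | succ k ih =>
    have hu' : u (Fin.last k).castSucc ≠ u (Fin.last (k + 1)) :=
      hu.ne (Fin.castSucc_lt_last _).ne
    rw [setIntegral_simplexWeight_succ u hx hx1 hu',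
      ih _ (hu.comp Fin.succAbove_right_injective), ih _ (hu.comp (Fin.castSucc_injective _)),
      eq_comm, eq_div_iff (sub_ne_zero.2 hu'), mul_comm, sub_mul_lagrangeSum_rpow u hu hx]

theorem simplex_integral_distinct_exponents_general (k : ℕ)
    (u : Fin (k + 1) → ℝ) (hu : Function.Injective u)
    (x : ℝ) (hx : x ∈ Set.Ioc (0:ℝ) 1) :
    ∫ t in {t : Fin k → ℝ | Antitone t ∧ (∀ i, t i ≤ 1) ∧ ∀ i, x ≤ t i},
      (∏ i : Fin k, t i ^ (u i.castSucc - u i.succ - 1)) ∂volume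
      = ∑ i : Fin (k + 1),
          x ^ (u i - u (Fin.last k)) / ∏ j ∈ Finset.univ.erase i, (u j - u i) :=
  setIntegral_simplexWeight u hu hx.1 hx.2

theorem simplex_integral_distinct_exponents (k : ℕ) (hk : 1 ≤ k)
    (u : Fin (k + 1) → ℝ) (hu : Function.Injective u)
    (x : ℝ) (hx : x ∈ Set.Ioc (0:ℝ) 1) :
    ∫ t in {t : Fin k → ℝ | Antitone t ∧ (∀ i, t i ≤ 1) ∧ ∀ i, x ≤ t i},
      (∏ i : Fin k, t i ^ (u i.castSucc - u i.succ - 1)) ∂volume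
      = ∑ i : Fin (k + 1),
          x ^ (u i - u (Fin.last k)) / ∏ j ∈ Finset.univ.erase i, (u j - u i) :=
  simplex_integral_distinct_exponents_general k u hu x hx
end

section
/- Let k ≥ 1 and let u₁, …, u_{k+1} be pairwise distinct elements of a field. Then ∑_{i=1}^{k} 1/((u_i - u_{k+1}) ∏_{j=1, j≠i}^{k} (u_j - u_i)) = 1/∏_{j=1}^{k} (u_j - u_{k+1}). -/
open Finset Polynomial

namespace Lagrange

variable {F ι : Type*} [Field F] [DecidableEq ι] {s : Finset ι} {v : ι → F} {x : F}

/-- The first barycentric form of the interpolant of the constant `1`. -/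
theorem sum_nodalWeight_mul_inv_sub_eq_inv_prod (hvs : Set.InjOn v s) (hs : s.Nonempty)
    (hx : ∀ i ∈ s, x ≠ v i) :
    ∑ i ∈ s, nodalWeight s v i * (x - v i)⁻¹ = (∏ i ∈ s, (x - v i))⁻¹ := by
  have h := eval_interpolate_not_at_node 1 hx
  rw [interpolate_one hvs hs, eval_one, eval_nodal] at h
  simpa only [Pi.one_apply, mul_one] using eq_inv_of_mul_eq_one_right h.symm

end Lagrange

theorem partial_fraction_identity {F : Type*} [Field F] (k : ℕ) (hk : 1 ≤ k)
    (u : Fin (k + 1) → F) (hu : Function.Injective u) :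
    ∑ i : Fin k, 1 / ((u i.castSucc - u (Fin.last k)) *
        ∏ j ∈ Finset.univ.erase i, (u j.castSucc - u i.castSucc))
      = 1 / ∏ j : Fin k, (u j.castSucc - u (Fin.last k)) := by
  have hne : (univ : Finset (Fin k)).Nonempty := @univ_nonempty _ _ (Fin.pos_iff_nonempty.mp hk)
  have hinj : Set.InjOn (fun i : Fin k => -u i.castSucc) (univ : Finset (Fin k)) :=
    (neg_injective.comp (hu.comp (Fin.castSucc_injective k))).injOn
  have hlast : ∀ i ∈ (univ : Finset (Fin k)), -u (Fin.last k) ≠ -u i.castSucc := fun i _ =>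
    neg_injective.ne (hu.ne (Fin.castSucc_ne_last i).symm)
  -- Negating nodes and point turns the Lagrange signs `v i - v j`, `x - v i` into the ones above.
  have h := Lagrange.sum_nodalWeight_mul_inv_sub_eq_inv_prod hinj hne hlast
  simp only [Lagrange.nodalWeight, neg_sub_neg, prod_inv_distrib] at h
  simp only [one_div, mul_inv, ← h, mul_comm]
end

section
/- Let u, v > 0 be real with u ≠ v, z complex with |z| < 1, and s > 0 real. Then ∫₀¹∫₀¹ x₁^{u-1} x₂^{v-1}/(1 - z x₁ x₂) · (-ln(x₁x₂))^s dx₁ dx₂ = Γ(s+1) · (Φ(z,s+1,v) - Φ(z,s+1,u))/(u - v), where Φ(z,t,w) = ∑_{n=0}^{∞} z^n/(w+n)^t. -/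
/-!
Substituting `x = e^{-t}`, `y = e^{-r}` turns the integral into
`∫∫_{t, r > 0} e^{-(u t + v r)} (t + r)^s / (1 - z e^{-(t + r)})`. Since `|z| < 1`, the geometric
expansion of `1 / (1 - z e^{-(t + r)})` may be integrated termwise, and the `n`-th term is `z^n`
times the kernel integral `∫∫ e^{-(a t + b r)} (t + r)^s` with `a = u + n`, `b = v + n`.
In the coordinates `(t, w) = (t, t + r)` the integral over `0 < t < w` is elementary, leaving
`(∫ w^s e^{-a w} - ∫ w^s e^{-b w}) / (b - a) = Γ(s + 1) (a^{-(s+1)} - b^{-(s+1)}) / (b - a)`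
by Euler's integral.
-/

open MeasureTheory Set Real

lemma integral_zero_one_eq_integral_Ioi_exp_neg {E : Type*} [NormedAddCommGroup E]
    [NormedSpace ℝ E] (f : ℝ → E) :
    ∫ x in (0:ℝ)..1, f x = ∫ t in Ioi 0, exp (-t) • f (exp (-t)) := by
  have himage : (fun t => exp (-t)) '' Ioi 0 = Ioo 0 1 := by
    rw [show (fun t => exp (-t)) = exp ∘ Neg.neg from rfl, image_comp, image_neg_Ioi, neg_zero,
      image_exp_Iio, exp_zero]
  have h := integral_image_eq_integral_abs_deriv_smul (measurableSet_Ioi (a := 0))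
    (fun t _ => ((hasDerivAt_neg t).exp).hasDerivWithinAt)
    (fun a _ b _ hab => neg_injective (exp_injective hab)) f
  rw [himage] at h
  simp only [mul_neg, mul_one, abs_neg, abs_of_pos (exp_pos _)] at h
  rw [intervalIntegral.integral_of_le zero_le_one, integral_Ioc_eq_integral_Ioo, h]

lemma measurePreserving_shearAddRight {G : Type*} [MeasurableSpace G] [AddGroup G]
    [MeasurableAdd₂ G] [MeasurableNeg G] (μ ν : Measure G) [SFinite μ] [SFinite ν]
    [ν.IsAddLeftInvariant] :
    MeasurePreserving (MeasurableEquiv.shearAddRight G) (μ.prod ν) (μ.prod ν) :=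
  measurePreserving_prod_add μ ν

lemma integral_exp_mul_of_ne_zero {c : ℝ} (hc : c ≠ 0) (w : ℝ) :
    ∫ t in (0:ℝ)..w, exp (c * t) = (exp (c * w) - 1) / c := by
  rw [intervalIntegral.integral_comp_mul_left exp hc, integral_exp, mul_zero, exp_zero,
    smul_eq_mul, inv_mul_eq_div]

lemma integrableOn_rpow_mul_exp_neg_mul {s a : ℝ} (hs : -1 < s) (ha : 0 < a) :
    IntegrableOn (fun w => w ^ s * exp (-(a * w))) (Ioi 0) := by
  simpa [neg_mul, rpow_one] using integrableOn_rpow_mul_exp_neg_mul_rpow hs one_pos ha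

lemma integral_rpow_mul_exp_neg_mul {s a : ℝ} (hs : -1 < s) (ha : 0 < a) :
    ∫ w in Ioi 0, w ^ s * exp (-(a * w)) = Gamma (s + 1) / a ^ (s + 1) := by
  have h := integral_rpow_mul_exp_neg_mul_Ioi (a := s + 1) (by linarith) ha
  rw [add_sub_cancel_right, div_rpow zero_le_one ha.le, one_rpow] at h
  rw [h, one_div_mul_eq_div]

section ExpKernel

variable {s a b : ℝ}

noncomputable def expKernel (s a b : ℝ) (p : ℝ × ℝ) : ℝ :=
  (p.1 + p.2) ^ s * exp (-(a * p.1 + b * p.2))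

/-- `expKernel` in the coordinates `(t, w) = (t, t + r)`, in which the quarter plane becomes
`0 < t < w`. -/
noncomputable def shearedExpKernel (s a b : ℝ) : ℝ × ℝ → ℝ :=
  {q : ℝ × ℝ | 0 < q.1 ∧ q.1 < q.2}.indicator
    fun q => q.2 ^ s * exp (-(b * q.2)) * exp ((b - a) * q.1)

lemma measurable_expKernel : Measurable (expKernel s a b) := by
  unfold expKernel; fun_prop

lemma expKernel_nonneg {p : ℝ × ℝ} (hp : 0 ≤ p.1 + p.2) : 0 ≤ expKernel s a b p :=
  mul_nonneg (rpow_nonneg hp s) (exp_pos _).le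

lemma expKernel_add_nat (n : ℕ) (p : ℝ × ℝ) :
    expKernel s (a + n) (b + n) p = expKernel s a b p * exp (-(p.1 + p.2)) ^ n := by
  rw [expKernel, expKernel, ← exp_nat_mul, mul_assoc, ← exp_add]
  ring_nf

lemma indicator_expKernel_eq_shearedExpKernel_comp :
    (Ioi 0 ×ˢ Ioi 0).indicator (expKernel s a b)
      = shearedExpKernel s a b ∘ MeasurableEquiv.shearAddRight ℝ := by
  ext ⟨t, r⟩
  change _ = shearedExpKernel s a b (t, t + r)
  simp only [shearedExpKernel, expKernel, indicator_apply, mem_prod, mem_Ioi, mem_ofPred_eq,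
    lt_add_iff_pos_right]
  congr 1
  rw [mul_assoc, ← exp_add]
  ring_nf

lemma shearedExpKernel_slice (w : ℝ) :
    (fun t => shearedExpKernel s a b (t, w))
      = (Ioo 0 w).indicator fun t => w ^ s * exp (-(b * w)) * exp ((b - a) * t) := by
  ext t
  simp [shearedExpKernel, indicator]

lemma integral_shearedExpKernel_slice (hab : a ≠ b) (w : ℝ) :
    ∫ t, shearedExpKernel s a b (t, w)
      = (Ioi 0).indicator (fun w => w ^ s * (exp (-(a * w)) - exp (-(b * w))) / (b - a)) w := by
  rw [shearedExpKernel_slice, integral_indicator measurableSet_Ioo]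
  rcases le_or_gt w 0 with hw | hw
  · rw [Ioo_eq_empty (not_lt.2 hw), Measure.restrict_empty, integral_zero_measure,
      indicator_of_notMem (show w ∉ Ioi 0 from not_lt.2 hw)]
  · have hexp : exp (-(b * w)) * exp ((b - a) * w) = exp (-(a * w)) := by
      rw [← exp_add]; ring_nf
    rw [indicator_of_mem (show w ∈ Ioi 0 from hw), integral_const_mul,
      ← integral_Ioc_eq_integral_Ioo, ← intervalIntegral.integral_of_le hw.le,
      integral_exp_mul_of_ne_zero (sub_ne_zero.2 hab.symm), mul_div_assoc', mul_assoc, mul_sub,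
      hexp, mul_one]

lemma measurable_shearedExpKernel : Measurable (shearedExpKernel s a b) := by
  refine Measurable.indicator (by fun_prop) ?_
  exact (measurableSet_lt measurable_const measurable_fst).inter
    (measurableSet_lt measurable_fst measurable_snd)

lemma integrable_shearedExpKernel (hs : -1 < s) (ha : 0 < a) (hb : 0 < b) (hab : a ≠ b) :
    Integrable (shearedExpKernel s a b) := by
  refine (integrable_prod_iff' measurable_shearedExpKernel.aestronglyMeasurable).2 ⟨?_, ?_⟩
  · refine Filter.Eventually.of_forall fun w => ?_
    rw [shearedExpKernel_slice, integrable_indicator_iff measurableSet_Ioo]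
    exact (Continuous.integrableOn_Icc (by fun_prop)).mono_set Ioo_subset_Icc_self
  · have hnonneg : 0 ≤ shearedExpKernel s a b := fun q => indicator_nonneg
      (fun q hq => by have := rpow_nonneg (hq.1.trans hq.2).le s; positivity) q
    simp_rw [norm_of_nonneg (hnonneg _), integral_shearedExpKernel_slice hab]
    rw [integrable_indicator_iff measurableSet_Ioi]
    exact IntegrableOn.congr_fun (((integrableOn_rpow_mul_exp_neg_mul hs ha).sub
      (integrableOn_rpow_mul_exp_neg_mul hs hb)).div_const (b - a))
        (fun w _ => by simp only [Pi.sub_apply]; ring) measurableSet_Ioi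

lemma integrableOn_expKernel (hs : -1 < s) (ha : 0 < a) (hb : 0 < b) (hab : a ≠ b) :
    IntegrableOn (expKernel s a b) (Ioi 0 ×ˢ Ioi 0) := by
  rw [← integrable_indicator_iff (measurableSet_Ioi.prod measurableSet_Ioi),
    indicator_expKernel_eq_shearedExpKernel_comp]
  exact (measurePreserving_shearAddRight volume volume).integrable_comp_of_integrable
    (integrable_shearedExpKernel hs ha hb hab)

lemma integral_expKernel (hs : -1 < s) (ha : 0 < a) (hb : 0 < b) (hab : a ≠ b) :
    ∫ p in Ioi 0 ×ˢ Ioi 0, expKernel s a b p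
      = (Gamma (s + 1) / a ^ (s + 1) - Gamma (s + 1) / b ^ (s + 1)) / (b - a) := by
  have hshear : ∫ p, (shearedExpKernel s a b ∘ MeasurableEquiv.shearAddRight ℝ) p
      = ∫ q, shearedExpKernel s a b q :=
    (measurePreserving_shearAddRight volume volume).integral_comp' _
  rw [← integral_indicator (measurableSet_Ioi.prod measurableSet_Ioi),
    indicator_expKernel_eq_shearedExpKernel_comp, hshear, Measure.volume_eq_prod,
    integral_prod_symm _ (integrable_shearedExpKernel hs ha hb hab)]
  simp_rw [integral_shearedExpKernel_slice hab]
  rw [integral_indicator measurableSet_Ioi, integral_div]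
  simp_rw [mul_sub]
  rw [integral_sub (integrableOn_rpow_mul_exp_neg_mul hs ha)
      (integrableOn_rpow_mul_exp_neg_mul hs hb),
    integral_rpow_mul_exp_neg_mul hs ha, integral_rpow_mul_exp_neg_mul hs hb]

end ExpKernel

section GeometricSeries

variable {s u v : ℝ} {z : ℂ}

lemma norm_mul_exp_neg_le {w : ℝ} (hw : 0 ≤ w) : ‖z * exp (-w)‖ ≤ ‖z‖ := by
  rw [norm_mul, Complex.norm_real, norm_of_nonneg (exp_pos _).le]
  exact mul_le_of_le_one_right (norm_nonneg z) (exp_le_one_iff.2 (by linarith))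

lemma norm_pow_mul_expKernel_add_nat_le {a b : ℝ} (n : ℕ) {p : ℝ × ℝ} (hp : 0 ≤ p.1 + p.2) :
    ‖z ^ n * (expKernel s (a + n) (b + n) p : ℂ)‖ ≤ ‖z‖ ^ n * expKernel s a b p := by
  rw [norm_mul, norm_pow, Complex.norm_real, expKernel_add_nat,
    norm_of_nonneg (mul_nonneg (expKernel_nonneg hp) (pow_nonneg (exp_pos _).le n))]
  gcongr
  exact mul_le_of_le_one_right (expKernel_nonneg hp)
    (pow_le_one₀ (exp_pos _).le (exp_le_one_iff.2 (by linarith)))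

/-- The integrand after the substitution `x = e^{-t}`, `y = e^{-r}`. -/
noncomputable def guilleraSondowIntegrand (s u v : ℝ) (z : ℂ) (p : ℝ × ℝ) : ℂ :=
  expKernel s u v p / (1 - z * exp (-(p.1 + p.2)))

lemma hasSum_guilleraSondowIntegrand (hz : ‖z‖ < 1) {p : ℝ × ℝ} (hp : 0 ≤ p.1 + p.2) :
    HasSum (fun n : ℕ => z ^ n * expKernel s (u + n) (v + n) p)
      (guilleraSondowIntegrand s u v z p) := by
  have hq := hasSum_geometric_of_norm_lt_one ((norm_mul_exp_neg_le hp).trans_lt hz)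
  rw [guilleraSondowIntegrand, div_eq_mul_inv]
  refine (hq.mul_left (expKernel s u v p : ℂ)).congr_fun fun n => ?_
  rw [expKernel_add_nat, mul_pow]
  push_cast
  ring

lemma norm_guilleraSondowIntegrand_le (hz : ‖z‖ < 1) {p : ℝ × ℝ} (hp : 0 ≤ p.1 + p.2) :
    ‖guilleraSondowIntegrand s u v z p‖ ≤ (1 - ‖z‖)⁻¹ * expKernel s u v p := by
  have hden : 1 - ‖z‖ ≤ ‖1 - z * exp (-(p.1 + p.2))‖ := by
    have := norm_sub_norm_le (1 : ℂ) (z * exp (-(p.1 + p.2)))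
    rw [norm_one] at this
    linarith [norm_mul_exp_neg_le (z := z) hp]
  rw [guilleraSondowIntegrand, norm_div, Complex.norm_real, norm_of_nonneg (expKernel_nonneg hp),
    div_eq_inv_mul]
  exact mul_le_mul_of_nonneg_right (inv_anti₀ (by linarith) hden) (expKernel_nonneg hp)

lemma integrableOn_guilleraSondowIntegrand (hs : -1 < s) (hu : 0 < u) (hv : 0 < v)
    (huv : u ≠ v) (hz : ‖z‖ < 1) :
    IntegrableOn (guilleraSondowIntegrand s u v z) (Ioi 0 ×ˢ Ioi 0) := by
  have hmeas : Measurable (guilleraSondowIntegrand s u v z) :=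
    (Complex.measurable_ofReal.comp measurable_expKernel).div (by fun_prop)
  refine Integrable.mono' ((integrableOn_expKernel hs hu hv huv).const_mul (1 - ‖z‖)⁻¹)
    hmeas.aestronglyMeasurable ?_
  refine (ae_restrict_iff' (measurableSet_Ioi.prod measurableSet_Ioi)).2 (ae_of_all _ ?_)
  exact fun p hp => norm_guilleraSondowIntegrand_le hz (add_pos hp.1 hp.2).le

lemma integral_guilleraSondowIntegrand (hs : -1 < s) (hu : 0 < u) (hv : 0 < v) (huv : u ≠ v)
    (hz : ‖z‖ < 1) :
    ∫ p in Ioi 0 ×ˢ Ioi 0, guilleraSondowIntegrand s u v z p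
      = ∑' n : ℕ, z ^ n * (((Gamma (s + 1) / (u + n) ^ (s + 1)
          - Gamma (s + 1) / (v + n) ^ (s + 1)) / (v - u) : ℝ) : ℂ) := by
  set S : Set (ℝ × ℝ) := Ioi 0 ×ˢ Ioi 0
  have hS : MeasurableSet S := measurableSet_Ioi.prod measurableSet_Ioi
  have hS_nonneg : ∀ p ∈ S, 0 ≤ p.1 + p.2 := fun p hp => (add_pos hp.1 hp.2).le
  let F : ℕ → ℝ × ℝ → ℂ := fun n p => z ^ n * expKernel s (u + n) (v + n) p
  have hF_int : ∀ n : ℕ, IntegrableOn (F n) S := fun n =>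
    ((integrableOn_expKernel hs (by positivity) (by positivity)
      (by simpa using huv)).ofReal).const_mul _
  have hF_norm : ∀ n : ℕ, ∫ p in S, ‖F n p‖ ≤ ‖z‖ ^ n * ∫ p in S, expKernel s u v p := by
    intro n
    rw [← integral_const_mul]
    refine setIntegral_mono_on (hF_int n).norm
      ((integrableOn_expKernel hs hu hv huv).const_mul _) hS
        fun p hp => norm_pow_mul_expKernel_add_nat_le n (hS_nonneg p hp)
  have hF_sum : Summable fun n : ℕ => ∫ p in S, ‖F n p‖ :=
    Summable.of_nonneg_of_le (fun n => integral_nonneg fun p => norm_nonneg _) hF_norm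
      ((summable_geometric_of_lt_one (norm_nonneg z) hz).mul_right _)
  calc ∫ p in S, guilleraSondowIntegrand s u v z p
      = ∫ p in S, ∑' n : ℕ, F n p :=
        setIntegral_congr_fun hS fun p hp =>
          ((hasSum_guilleraSondowIntegrand hz (hS_nonneg p hp)).tsum_eq).symm
    _ = ∑' n : ℕ, ∫ p in S, F n p := (integral_tsum_of_summable_integral_norm hF_int hF_sum).symm
    _ = _ := by
      refine tsum_congr fun n => ?_
      have hne : u + n ≠ v + n := fun h => huv (add_right_cancel h)
      rw [integral_const_mul, integral_complex_ofReal,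
        integral_expKernel hs (by positivity) (by positivity) hne, add_sub_add_right_eq_sub]

end GeometricSeries

lemma exp_neg_smul_exp_neg_smul_eq_guilleraSondowIntegrand {s u v : ℝ} {z : ℂ} (t r : ℝ) :
    exp (-t) • exp (-r) • (((exp (-t) ^ (u - 1) * exp (-r) ^ (v - 1)
        * (-log (exp (-t) * exp (-r))) ^ s : ℝ) : ℂ) / (1 - z * exp (-t) * exp (-r)))
      = guilleraSondowIntegrand s u v z (t, r) := by
  have hlog : -log (exp (-t) * exp (-r)) = t + r := by rw [← exp_add, log_exp]; ring
  have hnum : exp (-t) * exp (-r) * (exp (-t) ^ (u - 1) * exp (-r) ^ (v - 1)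
      * (-log (exp (-t) * exp (-r))) ^ s) = expKernel s u v (t, r) := by
    have hexp : exp (-(u * t + v * r))
        = exp (-t) * exp (-r) * exp (-t * (u - 1)) * exp (-r * (v - 1)) := by
      simp only [← exp_add]; ring_nf
    rw [hlog, ← exp_mul, ← exp_mul, expKernel, hexp]
    ring
  have hden : z * exp (-t) * exp (-r) = z * ((exp (-(t + r)) : ℝ) : ℂ) := by
    rw [neg_add, exp_add]; push_cast; ring
  rw [guilleraSondowIntegrand, ← hnum, hden, Complex.real_smul, Complex.real_smul]
  push_cast
  ring

lemma summable_pow_div_rpow_add_nat {z : ℂ} (hz : ‖z‖ < 1) {w t : ℝ} (hw : 0 < w) (ht : 0 ≤ t) :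
    Summable fun n : ℕ => z ^ n / (((w + n) ^ t : ℝ) : ℂ) := by
  refine Summable.of_norm_bounded ((summable_geometric_of_lt_one (norm_nonneg z) hz).mul_right
    (w ^ t)⁻¹) fun n => ?_
  rw [norm_div, norm_pow, Complex.norm_real, norm_of_nonneg (by positivity), div_eq_mul_inv]
  gcongr
  linarith [n.cast_nonneg (α := ℝ)]

lemma tsum_pow_mul_Gamma_div_sub {s u v : ℝ} {z : ℂ} (hs : -1 < s) (hu : 0 < u) (hv : 0 < v)
    (huv : u ≠ v) (hz : ‖z‖ < 1) :
    ∑' n : ℕ, z ^ n * (((Gamma (s + 1) / (u + n) ^ (s + 1)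
        - Gamma (s + 1) / (v + n) ^ (s + 1)) / (v - u) : ℝ) : ℂ)
      = (Gamma (s + 1) : ℂ) *
        ((∑' n : ℕ, z ^ n / (((v + n) ^ (s + 1) : ℝ) : ℂ)) -
          ∑' n : ℕ, z ^ n / (((u + n) ^ (s + 1) : ℝ) : ℂ)) / ((u - v : ℝ) : ℂ) := by
  have huv' : ((u - v : ℝ) : ℂ) ≠ 0 := Complex.ofReal_ne_zero.2 (sub_ne_zero.2 huv)
  have hterm : ∀ n : ℕ, z ^ n * (((Gamma (s + 1) / (u + n) ^ (s + 1)
      - Gamma (s + 1) / (v + n) ^ (s + 1)) / (v - u) : ℝ) : ℂ)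
      = (Gamma (s + 1) : ℂ) / ((u - v : ℝ) : ℂ) * (z ^ n / (((v + n) ^ (s + 1) : ℝ) : ℂ)
          - z ^ n / (((u + n) ^ (s + 1) : ℝ) : ℂ)) := by
    intro n
    rw [show v - u = -(u - v) by ring]
    push_cast
    field_simp
    ring
  rw [tsum_congr hterm, tsum_mul_left, Summable.tsum_sub
    (summable_pow_div_rpow_add_nat hz hv (by linarith))
    (summable_pow_div_rpow_add_nat hz hu (by linarith)), mul_div_right_comm]

theorem guillera_sondow_first (u v : ℝ) (hu : 0 < u) (hv : 0 < v) (huv : u ≠ v)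
    (z : ℂ) (hz : ‖z‖ < 1) (s : ℝ) (hs : 0 < s) :
    ∫ x in (0:ℝ)..1, ∫ y in (0:ℝ)..1,
        ((x ^ (u - 1) * y ^ (v - 1) * (-Real.log (x * y)) ^ s : ℝ) : ℂ) / (1 - z * x * y)
      = (Real.Gamma (s + 1) : ℂ) *
        ((∑' n : ℕ, z ^ n / (((v + n) ^ (s + 1) : ℝ) : ℂ)) -
          ∑' n : ℕ, z ^ n / (((u + n) ^ (s + 1) : ℝ) : ℂ)) / ((u - v : ℝ) : ℂ) := by
  have hs' : -1 < s := by linarith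
  calc _ = ∫ t in Ioi 0, ∫ r in Ioi 0, guilleraSondowIntegrand s u v z (t, r) := by
        simp_rw [integral_zero_one_eq_integral_Ioi_exp_neg, ← integral_smul,
          exp_neg_smul_exp_neg_smul_eq_guilleraSondowIntegrand]
    _ = ∫ p in Ioi 0 ×ˢ Ioi 0, guilleraSondowIntegrand s u v z p :=
        (setIntegral_prod _ (integrableOn_guilleraSondowIntegrand hs' hu hv huv hz)).symm
    _ = _ := by
        rw [integral_guilleraSondowIntegrand hs' hu hv huv hz,
          tsum_pow_mul_Gamma_div_sub hs' hu hv huv hz]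
end

section
/- For |z| < 1, real s, and real u > 0, the partial derivative in u of the Lerch series Φ(z,s,u) = ∑_{n=0}^{∞} z^n/(u+n)^s satisfies ∂Φ/∂u (z, s, u) = -s · Φ(z, s+1, u). -/
/-!
Each term `z ^ n / (w + n) ^ s` has derivative `-s z ^ n / (w + n) ^ (s + 1)`. For `w` in an
interval `[a, b] ⊂ (0, ∞)`, the monotonicity of `x ↦ x ^ t` bounds these derivatives by
`|s| ((a + n) ^ (-(s+1)) + (b + n) ^ (-(s+1))) ‖z‖ ^ n`, which is summable since the polynomial
growth is beaten by the geometric factor; so the series may be differentiated term by term.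
-/

open Filter Set

lemma summable_add_rpow_mul_geometric {r : ℝ} (hr : ‖r‖ < 1) {a : ℝ} (ha : 0 < a)
    (t : ℝ) :
    Summable fun n : ℕ => (a + n) ^ t * r ^ n := by
  set k := ⌈t⌉₊
  have hdom : Summable fun n : ℕ => 2 ^ k * ((n : ℝ) ^ k * ‖r‖ ^ n) :=
    (summable_pow_mul_geometric_of_norm_lt_one (R := ℝ) k (by rwa [norm_norm])).mul_left _
  refine hdom.of_norm_bounded_eventually_nat ?_
  filter_upwards [eventually_ge_atTop 1, eventually_ge_atTop ⌈a⌉₊] with n hn1 hna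
  have hn1 : (1 : ℝ) ≤ n := by exact_mod_cast hn1
  have hna : a ≤ n := (Nat.le_ceil a).trans (by exact_mod_cast hna)
  calc ‖(a + n) ^ t * r ^ n‖ = (a + n) ^ t * ‖r‖ ^ n := by
        rw [norm_mul, norm_pow, Real.norm_of_nonneg (by positivity)]
    _ ≤ (a + n) ^ (k : ℝ) * ‖r‖ ^ n := by
        gcongr
        exacts [by linarith, Nat.le_ceil t]
    _ ≤ (2 * n) ^ k * ‖r‖ ^ n := by
        rw [Real.rpow_natCast]
        gcongr
        linarith
    _ = 2 ^ k * ((n : ℝ) ^ k * ‖r‖ ^ n) := by ring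

lemma rpow_le_rpow_add_rpow_of_mem_Icc {a b w : ℝ} (ha : 0 < a) (hw : w ∈ Icc a b) (t : ℝ) :
    w ^ t ≤ a ^ t + b ^ t := by
  rcases le_or_gt 0 t with ht | ht
  · have := Real.rpow_le_rpow (ha.le.trans hw.1) hw.2 ht
    have := Real.rpow_nonneg ha.le t
    linarith
  · have := Real.rpow_le_rpow_of_nonpos ha hw.1 ht.le
    have := Real.rpow_nonneg (ha.le.trans (hw.1.trans hw.2)) t
    linarith

noncomputable def lerchTerm (z : ℂ) (s : ℝ) (n : ℕ) (w : ℝ) : ℂ :=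
  z ^ n / (((w + n) ^ s : ℝ) : ℂ)

section lerchTerm

variable (z : ℂ) (s : ℝ) (n : ℕ) {w : ℝ}

lemma lerchTerm_eq_mul_rpow_neg (hw : 0 ≤ w + n) :
    lerchTerm z s n w = z ^ n * (((w + n) ^ (-s) : ℝ) : ℂ) := by
  rw [lerchTerm, Real.rpow_neg hw, Complex.ofReal_inv, div_eq_mul_inv]

lemma norm_lerchTerm (hw : 0 ≤ w + n) :
    ‖lerchTerm z s n w‖ = (w + n) ^ (-s) * ‖z‖ ^ n := by
  rw [lerchTerm_eq_mul_rpow_neg z s n hw, norm_mul, norm_pow, Complex.norm_real,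
    Real.norm_of_nonneg (Real.rpow_nonneg hw _), mul_comm]

lemma hasDerivAt_lerchTerm (hw : 0 < w + n) :
    HasDerivAt (lerchTerm z s n) (-s * lerchTerm z (s + 1) n w) w := by
  have hreal : HasDerivAt (fun v : ℝ => (v + n) ^ (-s)) (1 * (-s) * (w + n) ^ (-s - 1)) w :=
    ((hasDerivAt_id w).add_const (n : ℝ)).rpow_const (Or.inl hw.ne')
  have hnear : lerchTerm z s n =ᶠ[nhds w] fun v => z ^ n * (((v + n) ^ (-s) : ℝ) : ℂ) := by
    filter_upwards [eventually_gt_nhds (neg_lt_iff_pos_add.2 hw)] with v hv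
    exact lerchTerm_eq_mul_rpow_neg z s n (neg_lt_iff_pos_add.1 hv).le
  refine ((hreal.ofReal_comp.const_mul (z ^ n)).congr_of_eventuallyEq hnear).congr_deriv ?_
  rw [lerchTerm_eq_mul_rpow_neg z (s + 1) n hw.le, show -s - 1 = -(s + 1) by ring]
  push_cast
  ring

lemma norm_lerchTerm_le {a b : ℝ} (ha : 0 < a) (hw : w ∈ Icc a b) :
    ‖lerchTerm z s n w‖ ≤ ((a + n) ^ (-s) + (b + n) ^ (-s)) * ‖z‖ ^ n := by
  have hn : (0 : ℝ) ≤ n := n.cast_nonneg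
  rw [norm_lerchTerm z s n (by linarith [hw.1])]
  gcongr
  exact rpow_le_rpow_add_rpow_of_mem_Icc (by positivity)
    ⟨by linarith [hw.1], by linarith [hw.2]⟩ _

variable {z}

lemma summable_lerchTerm (hz : ‖z‖ < 1) (hw : 0 < w) :
    Summable fun n => lerchTerm z s n w := by
  refine .of_norm ?_
  simp_rw [fun n : ℕ => norm_lerchTerm z s n (w := w) (by positivity)]
  exact summable_add_rpow_mul_geometric (by rwa [norm_norm]) hw _

end lerchTerm

theorem lerch_deriv (z : ℂ) (hz : ‖z‖ < 1) (s : ℝ) (u : ℝ) (hu : 0 < u) :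
    HasDerivAt (fun w : ℝ => ∑' n : ℕ, z ^ n / (((w + n) ^ s : ℝ) : ℂ))
      (-(s : ℂ) * ∑' n : ℕ, z ^ n / (((u + n) ^ (s + 1) : ℝ) : ℂ)) u := by
  have hz' : ‖‖z‖‖ < 1 := by rwa [norm_norm]
  have hmem : u ∈ Ioo (u / 2) (2 * u) := ⟨by linarith, by linarith⟩
  have hdominant : Summable fun n : ℕ =>
      ‖(s : ℂ)‖ * (((u / 2 + n) ^ (-(s + 1)) + (2 * u + n) ^ (-(s + 1))) * ‖z‖ ^ n) := by
    simp_rw [add_mul]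
    exact ((summable_add_rpow_mul_geometric hz' (by positivity) _).add
      (summable_add_rpow_mul_geometric hz' (by positivity) _)).mul_left _
  have hderiv := hasDerivAt_tsum_of_isPreconnected hdominant isOpen_Ioo isPreconnected_Ioo
    (fun n w hw => hasDerivAt_lerchTerm z s n
      (add_pos_of_pos_of_nonneg (by linarith [hw.1]) n.cast_nonneg))
    (fun n w hw => by
      rw [norm_mul, norm_neg]
      gcongr
      exact norm_lerchTerm_le z (s + 1) n (by positivity) (Ioo_subset_Icc_self hw))
    hmem (summable_lerchTerm s hz hu) hmem
  rwa [tsum_mul_left] at hderiv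
end

section
/- For every integer m > 1, Euler's constant γ equals (m-2)! times the integral over [0,1]^m of (m-1 - x₁ - x₁x₂ - ⋯ - x₁x₂⋯x_{m-1}) / ((1 - x₁x₂⋯x_m)(-ln(x₁x₂⋯x_m))^{m-1}) dx₁⋯dx_m. -/
open MeasureTheory

/-- Partial product `x₁ x₂ ⋯ x_{j+1}` of the coordinates of `x : Fin m → ℝ`. -/
noncomputable def partialProd (m : ℕ) (x : Fin m → ℝ) (j : ℕ) : ℝ :=
  ∏ i ∈ Finset.univ.filter (fun i : Fin m => (i : ℕ) ≤ j), x i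

/-!
Write `m = K + 2` and `P = x₁ ⋯ x_m`. Expanding `1 / (1 - P)` geometrically and writing
`K! / (-log P) ^ (K + 1) = ∫₀^∞ s^K P^s ds` turns the integral, after Tonelli, into
`∑ₙ ∫₀^∞ s^K / K! · M (n + s + 1) ds`, where `M (a + 1) = ∫ P^a · N` is the moment of the numerator
`N`. Each `∫ P^a · x₁ ⋯ x_j` is a product of one-dimensional integrals, and their sum telescopes to
`M b = (K + 1) / b^(K + 2) - 1 / b^(K + 1) + 1 / (b + 1)^(K + 1)`. An explicit antiderivative gives
`∫₀^∞ s^K M (s + c) ds = 1 / c - log ((c + 1) / c)`, and summing over `c = n + 1` yields `γ`.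
-/

open Set Real Filter Topology
open scoped Nat ENNReal

abbrev unitCube (ι : Type*) : Set (ι → ℝ) := Set.univ.pi fun _ => Ioo 0 1

section UnitCube

open Finset

variable {ι : Type*} [Fintype ι]

theorem measurableSet_unitCube : MeasurableSet (unitCube ι) :=
  MeasurableSet.univ_pi fun _ => measurableSet_Ioo

theorem prod_mem_Ioo_of_mem_unitCube [Nonempty ι] {x : ι → ℝ} (hx : x ∈ unitCube ι) :
    ∏ i, x i ∈ Set.Ioo 0 1 := by
  refine ⟨prod_pos fun i _ => (hx i (mem_univ i)).1, ?_⟩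
  simpa using prod_lt_prod_of_nonempty (g := 1) (fun i _ => (hx i (mem_univ i)).1)
    (fun i _ => (hx i (mem_univ i)).2) univ_nonempty

theorem volume_restrict_unitCube :
    volume.restrict (unitCube ι) = Measure.pi fun _ => volume.restrict (Ioo (0 : ℝ) 1) := by
  rw [volume_pi, Measure.restrict_pi_pi]

theorem integral_rpow_Ioo_zero_one {r : ℝ} (hr : -1 < r) :
    ∫ t in Ioo (0 : ℝ) 1, t ^ r = (r + 1)⁻¹ := by
  rw [← integral_Ioc_eq_integral_Ioo, ← intervalIntegral.integral_of_le zero_le_one,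
    integral_rpow (Or.inl hr), one_rpow, zero_rpow (by linarith), sub_zero, one_div]

theorem integrableOn_unitCube_prod_rpow {e : ι → ℝ} (he : ∀ i, -1 < e i) :
    IntegrableOn (fun x => ∏ i, x i ^ e i) (unitCube ι) := by
  rw [IntegrableOn, volume_restrict_unitCube]
  exact Integrable.fintype_prod (f := fun i t => t ^ e i)
    fun i => (intervalIntegral.integrableOn_Ioo_rpow_iff one_pos).2 (he i)

theorem integral_unitCube_prod_rpow {e : ι → ℝ} (he : ∀ i, -1 < e i) :
    ∫ x in unitCube ι, ∏ i, x i ^ e i = ∏ i, (e i + 1)⁻¹ := by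
  rw [volume_restrict_unitCube, integral_fintype_prod_eq_prod (f := fun i t => t ^ e i)]
  exact prod_congr rfl fun i _ => integral_rpow_Ioo_zero_one (he i)

variable [DecidableEq ι]

theorem rpow_prod_mul_prod_eqOn_unitCube (s : Finset ι) (a : ℝ) :
    EqOn (fun x => (∏ i, x i) ^ a * ∏ i ∈ s, x i)
      (fun x => ∏ i, x i ^ (if i ∈ s then a + 1 else a)) (unitCube ι) := by
  intro x hx
  have hpos i : 0 < x i := (hx i (mem_univ i)).1
  calc (∏ i, x i) ^ a * ∏ i ∈ s, x i = ∏ i, x i ^ a * if i ∈ s then x i else 1 := by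
        rw [prod_mul_distrib, finsetProd_rpow _ _ fun i _ => (hpos i).le, prod_ite_mem,
          Finset.univ_inter]
    _ = ∏ i, x i ^ (if i ∈ s then a + 1 else a) :=
        prod_congr rfl fun i _ => by split_ifs <;> simp [rpow_add_one (hpos i).ne']

theorem integrableOn_unitCube_rpow_prod_mul_prod (s : Finset ι) {a : ℝ} (ha : -1 < a) :
    IntegrableOn (fun x => (∏ i, x i) ^ a * ∏ i ∈ s, x i) (unitCube ι) :=
  (integrableOn_unitCube_prod_rpow fun i => by split_ifs <;> linarith).congr_fun
    (rpow_prod_mul_prod_eqOn_unitCube s a).symm measurableSet_unitCube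

theorem integral_unitCube_rpow_prod_mul_prod (s : Finset ι) {a : ℝ} (ha : -1 < a) :
    ∫ x in unitCube ι, (∏ i, x i) ^ a * ∏ i ∈ s, x i
      = ((a + 2) ^ #s * (a + 1) ^ (Fintype.card ι - #s))⁻¹ := by
  rw [setIntegral_congr_fun measurableSet_unitCube (rpow_prod_mul_prod_eqOn_unitCube s a),
    integral_unitCube_prod_rpow fun i => by split_ifs <;> linarith]
  have hfactor i :
      ((if i ∈ s then a + 1 else a) + 1)⁻¹ = if i ∈ s then (a + 2)⁻¹ else (a + 1)⁻¹ := by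
    split_ifs <;> ring
  rw [prod_congr rfl fun i _ => hfactor i, prod_ite, filter_univ_mem, ← compl_filter,
    filter_univ_mem, prod_const, prod_const, card_compl, mul_inv, inv_pow, inv_pow]

theorem integrableOn_unitCube_rpow_prod {a : ℝ} (ha : -1 < a) :
    IntegrableOn (fun x => (∏ i, x i) ^ a) (unitCube ι) := by
  simpa using integrableOn_unitCube_rpow_prod_mul_prod (∅ : Finset ι) ha

theorem integral_unitCube_rpow_prod {a : ℝ} (ha : -1 < a) :
    ∫ x in unitCube ι, (∏ i, x i) ^ a = ((a + 1) ^ Fintype.card ι)⁻¹ := by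
  simpa using integral_unitCube_rpow_prod_mul_prod (∅ : Finset ι) ha

end UnitCube

open Finset in
theorem sum_range_inv_pow_succ_mul_pow {𝕜 : Type*} [Field 𝕜] {b : 𝕜} (hb : b ≠ 0) (hb1 : b + 1 ≠ 0)
    (n : ℕ) :
    ∑ j ∈ range n, ((b + 1) ^ (j + 1) * b ^ (n - j))⁻¹ = (b ^ n)⁻¹ - ((b + 1) ^ n)⁻¹ := by
  have hterm : ∀ j ∈ range n, ((b + 1) ^ (j + 1) * b ^ (n - j))⁻¹
      = (b + 1)⁻¹ ^ j * b⁻¹ ^ (n - 1 - j) * -((b + 1)⁻¹ - b⁻¹) := by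
    intro j hj
    obtain ⟨k, rfl⟩ : ∃ k, n = j + 1 + k := ⟨n - (j + 1), by have := mem_range.1 hj; omega⟩
    rw [show j + 1 + k - j = k + 1 by omega, show j + 1 + k - 1 - j = k by omega]
    simp only [inv_pow]
    field_simp
    ring
  rw [sum_congr rfl hterm, ← sum_mul, mul_neg, geom_sum₂_mul, inv_pow, inv_pow, neg_sub]

section Numerator

open Finset

theorem card_filter_val_le {m j : ℕ} (hj : j < m) :
    #(univ.filter fun i : Fin m => (i : ℕ) ≤ j) = j + 1 := by
  rw [show univ.filter (fun i : Fin m => (i : ℕ) ≤ j) = Finset.Iic ⟨j, hj⟩ by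
    ext i; simp [Fin.le_def]]
  simp

theorem partialProd_le_one {m : ℕ} {x : Fin m → ℝ} (hx : x ∈ unitCube (Fin m)) (j : ℕ) :
    partialProd m x j ≤ 1 :=
  prod_le_one (fun i _ => (hx i (mem_univ i)).1.le) fun i _ => (hx i (mem_univ i)).2.le

theorem integrableOn_unitCube_rpow_prod_mul_partialProd (m j : ℕ) {a : ℝ} (ha : -1 < a) :
    IntegrableOn (fun x => (∏ i, x i) ^ a * partialProd m x j) (unitCube (Fin m)) :=
  integrableOn_unitCube_rpow_prod_mul_prod _ ha

theorem integral_unitCube_rpow_prod_mul_partialProd {m j : ℕ} (hj : j < m) {a : ℝ}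
    (ha : -1 < a) :
    ∫ x in unitCube (Fin m), (∏ i, x i) ^ a * partialProd m x j
      = ((a + 1 + 1) ^ (j + 1) * (a + 1) ^ (m - (j + 1)))⁻¹ := by
  simp only [partialProd]
  rw [integral_unitCube_rpow_prod_mul_prod _ ha, card_filter_val_le hj, Fintype.card_fin,
    add_assoc, one_add_one_eq_two]

noncomputable def cubeNumerator (K : ℕ) (x : Fin (K + 2) → ℝ) : ℝ :=
  (K + 1) - ∑ j ∈ range (K + 1), partialProd (K + 2) x j

noncomputable def numeratorMoment (K : ℕ) (a : ℝ) : ℝ :=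
  (K + 1) / a ^ (K + 2) - ((a ^ (K + 1))⁻¹ - ((a + 1) ^ (K + 1))⁻¹)

theorem measurable_cubeNumerator (K : ℕ) : Measurable (cubeNumerator K) := by
  unfold cubeNumerator partialProd
  fun_prop

theorem cubeNumerator_nonneg {K : ℕ} {x : Fin (K + 2) → ℝ} (hx : x ∈ unitCube (Fin (K + 2))) :
    0 ≤ cubeNumerator K x := by
  have hsum := sum_le_sum fun j (_ : j ∈ range (K + 1)) => partialProd_le_one hx j
  rw [sum_const, card_range, nsmul_one] at hsum
  rw [cubeNumerator, sub_nonneg]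
  exact_mod_cast hsum

theorem integrableOn_unitCube_rpow_prod_mul_cubeNumerator (K : ℕ) {a : ℝ} (ha : -1 < a) :
    IntegrableOn (fun x => (∏ i, x i) ^ a * cubeNumerator K x) (unitCube (Fin (K + 2))) := by
  simp only [cubeNumerator, mul_sub, mul_sum]
  exact ((integrableOn_unitCube_rpow_prod ha).mul_const _).sub
    (integrable_finsetSum _ fun j _ => integrableOn_unitCube_rpow_prod_mul_partialProd _ j ha)

theorem integral_unitCube_rpow_prod_mul_cubeNumerator (K : ℕ) {a : ℝ} (ha : -1 < a) :
    ∫ x in unitCube (Fin (K + 2)), (∏ i, x i) ^ a * cubeNumerator K x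
      = numeratorMoment K (a + 1) := by
  have hpp (j : ℕ) := integrableOn_unitCube_rpow_prod_mul_partialProd (K + 2) j ha
  have hterm (j : ℕ) (hj : j ∈ range (K + 1)) :
      ∫ x in unitCube (Fin (K + 2)), (∏ i, x i) ^ a * partialProd (K + 2) x j
        = ((a + 1 + 1) ^ (j + 1) * (a + 1) ^ (K + 1 - j))⁻¹ := by
    rw [integral_unitCube_rpow_prod_mul_partialProd (by grind) ha,
      show K + 2 - (j + 1) = K + 1 - j by grind]
  simp only [cubeNumerator, mul_sub, mul_sum]
  rw [integral_sub ((integrableOn_unitCube_rpow_prod ha).mul_const _)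
      (integrable_finsetSum _ fun j _ => hpp j), integral_finsetSum _ fun j _ => hpp j,
    sum_congr rfl hterm, integral_mul_const, integral_unitCube_rpow_prod ha, Fintype.card_fin,
    sum_range_inv_pow_succ_mul_pow (by linarith) (by linarith), numeratorMoment]
  ring

theorem lintegral_unitCube_mul_rpow_prod_mul_cubeNumerator (K : ℕ) {a b : ℝ} (ha : -1 < a)
    (hb : 0 ≤ b) :
    ∫⁻ x in unitCube (Fin (K + 2)), ENNReal.ofReal (b * ((∏ i, x i) ^ a * cubeNumerator K x))
      = ENNReal.ofReal (b * numeratorMoment K (a + 1)) := by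
  have hnonneg : ∀ x ∈ unitCube (Fin (K + 2)), 0 ≤ b * ((∏ i, x i) ^ a * cubeNumerator K x) :=
    fun x hx => mul_nonneg hb (mul_nonneg (rpow_nonneg (prod_mem_Ioo_of_mem_unitCube hx).1.le _)
      (cubeNumerator_nonneg hx))
  rw [← ofReal_integral_eq_lintegral_ofReal
    ((integrableOn_unitCube_rpow_prod_mul_cubeNumerator K ha).const_mul b)
    (ae_restrict_of_forall_mem measurableSet_unitCube hnonneg), integral_const_mul,
    integral_unitCube_rpow_prod_mul_cubeNumerator K ha]

end Numerator

theorem tendsto_div_add_const_atTop (c : ℝ) : Tendsto (fun t : ℝ => t / (t + c)) atTop (𝓝 1) := by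
  have hlim : Tendsto (fun t : ℝ => 1 - c / (t + c)) atTop (𝓝 (1 - 0)) := tendsto_const_nhds.sub
    (tendsto_const_nhds.div_atTop (tendsto_atTop_add_const_right _ c tendsto_id))
  rw [sub_zero] at hlim
  refine hlim.congr' ?_
  filter_upwards [eventually_gt_atTop (-c)] with t ht
  field_simp [show t + c ≠ 0 by linarith]
  ring

theorem hasDerivAt_div_add_pow (n : ℕ) {c s : ℝ} (h : s + c ≠ 0) :
    HasDerivAt (fun t => (t / (t + c)) ^ (n + 1)) ((n + 1) * c * s ^ n / (s + c) ^ (n + 2)) s := by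
  have hbase := (hasDerivAt_id' s).fun_div ((hasDerivAt_id' s).add_const c) h
  refine (hbase.fun_pow (n + 1)).congr_deriv ?_
  rw [Nat.add_sub_cancel, div_pow]
  field_simp
  push_cast
  ring

-- `log c` plus the tail `∑_{j ≥ K} u^(j+1) / (j+1)` of the series of `-log (1 - u)`,
-- at `u = t / (t + c)`.
noncomputable def logSubPartialSum (K : ℕ) (c t : ℝ) : ℝ :=
  log (t + c) - ∑ j ∈ Finset.range K, (t / (t + c)) ^ (j + 1) / (j + 1)

theorem hasDerivAt_logSubPartialSum (K : ℕ) {c s : ℝ} (h : s + c ≠ 0) :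
    HasDerivAt (logSubPartialSum K c) (s ^ K / (s + c) ^ (K + 1)) s := by
  induction K with
  | zero =>
    unfold logSubPartialSum
    simpa using ((hasDerivAt_id s).add_const c).log h
  | succ K ih =>
    have hK := (hasDerivAt_div_add_pow K h).div_const ((K : ℝ) + 1)
    have hfun : logSubPartialSum (K + 1) c
        = fun t => logSubPartialSum K c t - (t / (t + c)) ^ (K + 1) / (K + 1) := by
      ext t
      simp only [logSubPartialSum, Finset.sum_range_succ]
      ring
    rw [hfun]
    refine (ih.fun_sub hK).congr_deriv ?_
    field_simp
    ring

theorem tendsto_logSubPartialSum_sub (K : ℕ) (c d : ℝ) :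
    Tendsto (fun t => logSubPartialSum K c t - logSubPartialSum K d t) atTop (𝓝 0) := by
  set f : ℝ → ℝ := fun u => -log u - ∑ j ∈ Finset.range K, u ^ (j + 1) / (j + 1)
  have hf : ContinuousAt f 1 := (continuousAt_log one_ne_zero).neg.sub (by fun_prop)
  have hlim := (hf.tendsto.comp (tendsto_div_add_const_atTop c)).sub
    (hf.tendsto.comp (tendsto_div_add_const_atTop d))
  rw [sub_self] at hlim
  refine hlim.congr' ?_
  filter_upwards [eventually_gt_atTop (max 0 (max (-c) (-d)))] with t ht
  simp only [max_lt_iff] at ht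
  simp only [Function.comp, f, logSubPartialSum]
  rw [log_div ht.1.ne' (by linarith), log_div ht.1.ne' (by linarith)]
  ring

theorem numeratorMoment_nonneg (K : ℕ) {a : ℝ} (ha : 0 < a) : 0 ≤ numeratorMoment K a := by
  have hbernoulli : 1 - (K + 1) / (a + 1) ≤ (a / (a + 1)) ^ (K + 1) := by
    have h := one_add_mul_le_pow (a := -(a + 1)⁻¹)
      (by linarith [inv_le_one_of_one_le₀ (by linarith : (1:ℝ) ≤ a + 1)]) (K + 1)
    rw [show 1 + -(a + 1)⁻¹ = a / (a + 1) by field_simp; ring] at h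
    push_cast at h
    linarith [div_eq_mul_inv ((K:ℝ) + 1) (a + 1)]
  have hdiff : (a ^ (K + 1))⁻¹ - ((a + 1) ^ (K + 1))⁻¹ ≤ (K + 1) / a ^ (K + 2) :=
    calc (a ^ (K + 1))⁻¹ - ((a + 1) ^ (K + 1))⁻¹ = (1 - (a / (a + 1)) ^ (K + 1)) / a ^ (K + 1) := by
          rw [div_pow]
          field_simp
      _ ≤ (K + 1) / (a + 1) / a ^ (K + 1) := by gcongr; linarith
      _ ≤ (K + 1) / a ^ (K + 2) := by
          rw [div_div]
          refine div_le_div_of_nonneg_left (by positivity) (by positivity) ?_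
          rw [pow_succ, mul_comm]
          nlinarith [pow_pos ha (K + 1)]
  rw [numeratorMoment]
  linarith

theorem hasDerivAt_numeratorMoment_antideriv (K : ℕ) {c s : ℝ} (hc : 0 < c) (hs : 0 ≤ s) :
    HasDerivAt
      (fun t => (t / (t + c)) ^ (K + 1) / c - logSubPartialSum K c t + logSubPartialSum K (c + 1) t)
      (s ^ K * numeratorMoment K (s + c)) s := by
  have h1 := (hasDerivAt_div_add_pow K (by positivity : s + c ≠ 0)).div_const c
  have h2 := hasDerivAt_logSubPartialSum K (by positivity : s + c ≠ 0)
  have h3 := hasDerivAt_logSubPartialSum K (by positivity : s + (c + 1) ≠ 0)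
  refine ((h1.fun_sub h2).fun_add h3).congr_deriv ?_
  rw [numeratorMoment]
  field_simp
  ring

theorem lintegral_Ioi_pow_mul_numeratorMoment (K : ℕ) {c : ℝ} (hc : 0 < c) :
    ∫⁻ s in Ioi 0, ENNReal.ofReal (s ^ K * numeratorMoment K (s + c))
      = ENNReal.ofReal (c⁻¹ - (log (c + 1) - log c)) := by
  have hderiv (s) (hs : s ∈ Ici (0:ℝ)) := hasDerivAt_numeratorMoment_antideriv K hc hs
  have hnonneg (s) (hs : s ∈ Ioi (0:ℝ)) : 0 ≤ s ^ K * numeratorMoment K (s + c) :=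
    mul_nonneg (pow_nonneg (le_of_lt hs) K) (numeratorMoment_nonneg K (by linarith [mem_Ioi.1 hs]))
  have hlim : Tendsto (fun t => (t / (t + c)) ^ (K + 1) / c - logSubPartialSum K c t
      + logSubPartialSum K (c + 1) t) atTop (𝓝 c⁻¹) := by
    have := (((tendsto_div_add_const_atTop c).pow (K + 1)).div_const c).sub
      (tendsto_logSubPartialSum_sub K c (c + 1))
    simpa [sub_add] using this
  rw [← ofReal_integral_eq_lintegral_ofReal (integrableOn_Ioi_deriv_of_nonneg' hderiv hnonneg hlim)
    (ae_restrict_of_forall_mem measurableSet_Ioi hnonneg),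
    integral_Ioi_of_hasDerivAt_of_nonneg' hderiv hnonneg hlim]
  simp [logSubPartialSum, neg_add_eq_sub]

theorem inv_sub_log_add_one_sub_log_nonneg {c : ℝ} (hc : 0 < c) :
    0 ≤ c⁻¹ - (log (c + 1) - log c) := by
  have h := log_le_sub_one_of_pos (by positivity : 0 < (c + 1) / c)
  rw [log_div (by positivity) hc.ne', add_div, div_self hc.ne', one_div] at h
  linarith

theorem hasSum_inv_sub_log_add_one_sub_log :
    HasSum (fun n : ℕ => ((n : ℝ) + 1)⁻¹ - (log ((n : ℝ) + 1 + 1) - log ((n : ℝ) + 1)))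
      eulerMascheroniConstant := by
  rw [hasSum_iff_tendsto_nat_of_nonneg fun n => inv_sub_log_add_one_sub_log_nonneg (by positivity)]
  convert tendsto_eulerMascheroniSeq using 2 with N
  have htel := Finset.sum_range_sub (fun n : ℕ => log ((n : ℝ) + 1)) N
  push_cast at htel
  rw [Finset.sum_sub_distrib, htel, eulerMascheroniSeq, harmonic]
  push_cast
  simp

theorem lintegral_Ioi_pow_div_factorial_mul_rpow (K : ℕ) {p : ℝ} (hp0 : 0 < p) (hp1 : p < 1) :
    ∫⁻ s in Ioi 0, ENNReal.ofReal (s ^ K / K ! * p ^ s)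
      = ENNReal.ofReal ((-log p) ^ (K + 1))⁻¹ := by
  have hr : 0 < -log p := neg_pos.2 (log_neg hp0 hp1)
  have hexp (s : ℝ) :
      s ^ K / K ! * p ^ s = (K ! : ℝ)⁻¹ * (s ^ ((K + 1 : ℝ) - 1) * exp (-(-log p * s))) := by
    rw [rpow_def_of_pos hp0, add_sub_cancel_right, rpow_natCast]
    ring_nf
  have hint : IntegrableOn (fun s : ℝ => s ^ ((K + 1 : ℝ) - 1) * exp (-(-log p * s))) (Ioi 0) := by
    simpa using integrableOn_rpow_mul_exp_neg_mul_rpow (s := K) (p := 1)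
      (neg_one_lt_zero.trans_le K.cast_nonneg) one_pos hr
  simp_rw [hexp]
  rw [← ofReal_integral_eq_lintegral_ofReal (hint.const_mul _)
    (ae_restrict_of_forall_mem measurableSet_Ioi fun s hs => by have := mem_Ioi.1 hs; positivity),
    integral_const_mul, integral_rpow_mul_exp_neg_mul_Ioi (by positivity) hr,
    Gamma_nat_eq_factorial, ← Nat.cast_add_one, rpow_natCast]
  congr 1
  rw [one_div, inv_pow]
  field_simp

theorem ofReal_div_one_sub_mul_neg_log_pow_eq_tsum (K : ℕ) {p q : ℝ} (hp0 : 0 < p) (hp1 : p < 1)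
    (hq : 0 ≤ q) :
    ENNReal.ofReal (q / ((1 - p) * (-log p) ^ (K + 1)))
      = ∑' n : ℕ, ∫⁻ s in Ioi 0, ENNReal.ofReal (s ^ K / K ! * (p ^ ((n : ℝ) + s) * q)) := by
  have hsplit (n : ℕ) (s : ℝ) (hs : s ∈ Ioi 0) :
      ENNReal.ofReal (s ^ K / K ! * (p ^ ((n : ℝ) + s) * q)) = ENNReal.ofReal p ^ n * ENNReal.ofReal q * ENNReal.ofReal (s ^ K / K ! * p ^ s) := by
    have := mem_Ioi.1 hs
    rw [← ENNReal.ofReal_pow hp0.le, ← ENNReal.ofReal_mul (by positivity),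
      ← ENNReal.ofReal_mul (by positivity), rpow_add hp0, rpow_natCast]
    ring_nf
  have hterm (n : ℕ) : ∫⁻ s in Ioi 0, ENNReal.ofReal (s ^ K / K ! * (p ^ ((n : ℝ) + s) * q))
      = ENNReal.ofReal p ^ n * ENNReal.ofReal q * ENNReal.ofReal ((-log p) ^ (K + 1))⁻¹ := by
    rw [setLIntegral_congr_fun measurableSet_Ioi (hsplit n), lintegral_const_mul' _ _
      (ENNReal.mul_ne_top (ENNReal.pow_ne_top ENNReal.ofReal_ne_top) ENNReal.ofReal_ne_top),
      lintegral_Ioi_pow_div_factorial_mul_rpow K hp0 hp1]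
  rw [tsum_congr hterm, ENNReal.tsum_mul_right, ENNReal.tsum_mul_right, ENNReal.tsum_geometric,
    ← ENNReal.ofReal_one, ← ENNReal.ofReal_sub _ hp0.le, ← ENNReal.ofReal_inv_of_pos (by linarith),
    ← ENNReal.ofReal_mul (by linarith [inv_pos.2 (by linarith : (0:ℝ) < 1 - p)]),
    ← ENNReal.ofReal_mul (by positivity)]
  congr 1
  field_simp

theorem lintegral_unitCube_ofReal_cubeNumerator_div (K : ℕ) :
    ∫⁻ x in unitCube (Fin (K + 2)),
        ENNReal.ofReal (cubeNumerator K x / ((1 - ∏ i, x i) * (-log (∏ i, x i)) ^ (K + 1)))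
      = ENNReal.ofReal (eulerMascheroniConstant / K !) := by
  set k : ℕ → (Fin (K + 2) → ℝ) → ℝ → ℝ≥0∞ := fun n x s =>
    ENNReal.ofReal (s ^ K / K ! * ((∏ i, x i) ^ ((n : ℝ) + s) * cubeNumerator K x))
  have hmeas := measurable_cubeNumerator K
  have hk (n : ℕ) : Measurable (Function.uncurry (k n)) := by fun_prop
  have hk' (n : ℕ) : Measurable fun x => ∫⁻ s in Ioi 0, k n x s := (hk n).lintegral_prod_right'
  have hK : (0 : ℝ) ≤ (K ! : ℝ)⁻¹ := inv_nonneg.2 (Nat.cast_nonneg _)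
  calc _ = ∫⁻ x in unitCube (Fin (K + 2)), ∑' n, ∫⁻ s in Ioi 0, k n x s :=
        setLIntegral_congr_fun measurableSet_unitCube fun x hx =>
          ofReal_div_one_sub_mul_neg_log_pow_eq_tsum K (prod_mem_Ioo_of_mem_unitCube hx).1
            (prod_mem_Ioo_of_mem_unitCube hx).2 (cubeNumerator_nonneg hx)
    _ = ∑' n, ∫⁻ s in Ioi 0, ∫⁻ x in unitCube (Fin (K + 2)), k n x s := by
        rw [lintegral_tsum fun n => (hk' n).aemeasurable]
        exact tsum_congr fun n => lintegral_lintegral_swap (hk n).aemeasurable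
    _ = ∑' n : ℕ, ∫⁻ s in Ioi 0, ENNReal.ofReal (K ! : ℝ)⁻¹
          * ENNReal.ofReal (s ^ K * numeratorMoment K (s + ((n : ℝ) + 1))) := by
        refine tsum_congr fun n => setLIntegral_congr_fun measurableSet_Ioi fun s hs => ?_
        have hs : 0 < s := hs
        rw [lintegral_unitCube_mul_rpow_prod_mul_cubeNumerator K (by linarith) (by positivity),
          ← ENNReal.ofReal_mul hK]
        ring_nf
    _ = ∑' n : ℕ, ENNReal.ofReal (K ! : ℝ)⁻¹
          * ENNReal.ofReal (((n : ℝ) + 1)⁻¹ - (log ((n : ℝ) + 1 + 1) - log ((n : ℝ) + 1))) := by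
        simp_rw [lintegral_const_mul' _ _ ENNReal.ofReal_ne_top]
        exact tsum_congr fun n => by rw [lintegral_Ioi_pow_mul_numeratorMoment K (by positivity)]
    _ = ENNReal.ofReal (eulerMascheroniConstant / K !) := by
        rw [ENNReal.tsum_mul_left, ← ENNReal.ofReal_tsum_of_nonneg
          (fun n => inv_sub_log_add_one_sub_log_nonneg (by positivity))
          hasSum_inv_sub_log_add_one_sub_log.summable, hasSum_inv_sub_log_add_one_sub_log.tsum_eq,
          ← ENNReal.ofReal_mul hK, inv_mul_eq_div]

theorem integral_unitCube_cubeNumerator_div (K : ℕ) :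
    ∫ x in unitCube (Fin (K + 2)),
        cubeNumerator K x / ((1 - ∏ i, x i) * (-log (∏ i, x i)) ^ (K + 1))
      = eulerMascheroniConstant / K ! := by
  have hnonneg : ∀ x ∈ unitCube (Fin (K + 2)),
      0 ≤ cubeNumerator K x / ((1 - ∏ i, x i) * (-log (∏ i, x i)) ^ (K + 1)) := fun x hx => by
    obtain ⟨h0, h1⟩ := prod_mem_Ioo_of_mem_unitCube hx
    exact div_nonneg (cubeNumerator_nonneg hx)
      (mul_nonneg (sub_nonneg.2 h1.le) (pow_nonneg (neg_nonneg.2 (log_nonpos h0.le h1.le)) _))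
  have hmeas := measurable_cubeNumerator K
  rw [integral_eq_lintegral_of_nonneg_ae (ae_restrict_of_forall_mem measurableSet_unitCube hnonneg)
      (by fun_prop : Measurable _).aestronglyMeasurable,
    lintegral_unitCube_ofReal_cubeNumerator_div, ENNReal.toReal_ofReal
      (div_nonneg (by linarith [one_half_lt_eulerMascheroniConstant]) (Nat.cast_nonneg _))]

theorem euler_mascheroni_m_dim (m : ℕ) (hm : 1 < m) :
    Real.eulerMascheroniConstant
      = Nat.factorial (m - 2) *
        ∫ x in Set.univ.pi (fun _ : Fin m => Set.Ioo (0:ℝ) 1),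
          (m - 1 - ∑ j ∈ Finset.range (m - 1), partialProd m x j) /
            ((1 - ∏ i, x i) * (-Real.log (∏ i, x i)) ^ (m - 1)) ∂volume := by
  obtain ⟨K, rfl⟩ : ∃ K, m = K + 2 := ⟨m - 2, by omega⟩
  have hnum (x : Fin (K + 2) → ℝ) :
      ((K + 2 : ℕ) : ℝ) - 1 - ∑ j ∈ Finset.range (K + 1), partialProd (K + 2) x j
        = cubeNumerator K x := by
    rw [cubeNumerator]
    push_cast
    ring
  rw [show K + 2 - 1 = K + 1 by omega, show K + 2 - 2 = K by omega]
  simp_rw [hnum]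
  rw [integral_unitCube_cubeNumerator_div, mul_div_cancel₀ _ (by positivity)]
end

section
/- Euler's constant γ equals ∫₀¹∫₀¹ (1-x₁)/((1 - x₁x₂)(-ln(x₁x₂))) dx₁ dx₂. -/
/-!
Put `K u = 1/(1-u) + 1/log u` and `w u = 1/((1-u)(-log u))`. The substitution `u = xy` turns the
inner integral into `(1-x)/x · ∫₀ˣ w`, and Tonelli on the triangle `0 < u < x < 1` turns the double
integral into `∫₀¹ w(u) ∫ᵤ¹ (1-x)/x dx du = ∫₀¹ K`.

For the last integral, `(1-uⁿ) K(u) = ∑_{k<n} uᵏ - (1-uⁿ)/(-log u)` and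
`∫₀¹ (1-uⁿ)/(-log u) du = ∫₀ⁿ ∫₀¹ uˢ du ds = log(n+1)`, so `∫₀¹ (1-uⁿ) K = H_n - log(n+1)`;
since `0 ≤ K ≤ 1`, dominated convergence gives `∫₀¹ K = γ`.
-/

open Real Set MeasureTheory Filter Topology
open scoped ENNReal

namespace Sondow

noncomputable def eulerKernel (u : ℝ) : ℝ := (1 - u)⁻¹ + (log u)⁻¹

lemma measurable_eulerKernel : Measurable eulerKernel := by
  unfold eulerKernel
  fun_prop

lemma eulerKernel_mem_Icc {u : ℝ} (hu : u ∈ Ioo (0:ℝ) 1) : eulerKernel u ∈ Icc 0 1 := by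
  obtain ⟨h0, h1⟩ := hu
  have hlog : 0 < -log u := neg_pos.2 (log_neg h0 h1)
  have lower : 1 - u ≤ -log u := by linarith [log_le_sub_one_of_pos h0]
  have upper : -log u ≤ u⁻¹ - 1 := by linarith [one_sub_inv_le_log_of_pos h0]
  have hK : eulerKernel u = (1 - u)⁻¹ - (-log u)⁻¹ := by
    rw [eulerKernel, inv_neg, sub_neg_eq_add]
  have hu' : (u⁻¹ - 1)⁻¹ = (1 - u)⁻¹ - 1 := by
    field_simp [(sub_pos.2 h1).ne']
    ring
  rw [hK]
  constructor
  · linarith [inv_anti₀ (sub_pos.2 h1) lower]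
  · linarith [inv_anti₀ hlog upper]

lemma one_sub_pow_mul_eulerKernel {u : ℝ} (hu : u ∈ Ioo (0:ℝ) 1) (n : ℕ) :
    (1 - u ^ n) * eulerKernel u = ∑ k ∈ Finset.range n, u ^ k + (1 - u ^ n) / log u := by
  have h1 : 1 - u ≠ 0 := (sub_pos.2 hu.2).ne'
  rw [eulerKernel, ← mul_neg_geom_sum, div_eq_mul_inv]
  field_simp

lemma integral_geom_sum_eq_harmonic (n : ℕ) :
    ∫ u in Ioo (0:ℝ) 1, ∑ k ∈ Finset.range n, u ^ k = harmonic n := by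
  rw [← integral_Ioc_eq_integral_Ioo, ← intervalIntegral.integral_of_le zero_le_one,
    intervalIntegral.integral_finsetSum fun k _ => (continuous_pow k).intervalIntegrable 0 1]
  simp [harmonic, integral_pow]

lemma integral_const_rpow {u : ℝ} (hu : 0 < u) (hu1 : u ≠ 1) (a : ℝ) :
    ∫ s in (0:ℝ)..a, u ^ s = (u ^ a - 1) / log u := by
  have hlog : log u ≠ 0 := log_ne_zero_of_pos_of_ne_one hu hu1
  have hderiv : ∀ s ∈ uIcc 0 a, HasDerivAt (fun s => u ^ s / log u) (u ^ s) s := fun s _ => by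
    simpa [hlog] using ((hasStrictDerivAt_const_rpow hu s).hasDerivAt.div_const (log u))
  rw [intervalIntegral.integral_eq_sub_of_hasDerivAt hderiv
    ((continuous_const_rpow hu.ne').intervalIntegrable 0 a), rpow_zero, sub_div]

lemma integral_rpow_Ioo_zero_one {s : ℝ} (hs : -1 < s) : ∫ u in Ioo (0:ℝ) 1, u ^ s = (1 + s)⁻¹ := by
  rw [← integral_Ioc_eq_integral_Ioo, ← intervalIntegral.integral_of_le zero_le_one,
    integral_rpow (Or.inl hs), one_rpow, zero_rpow (by linarith), add_comm]
  simp [div_eq_inv_mul]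

lemma one_sub_rpow_div_neg_log_eq_integral {u a : ℝ} (hu : u ∈ Ioo (0:ℝ) 1) (ha : 0 ≤ a) :
    (1 - u ^ a) / -log u = ∫ s in Ioo 0 a, u ^ s := by
  rw [← integral_Ioc_eq_integral_Ioo, ← intervalIntegral.integral_of_le ha,
    integral_const_rpow hu.1 hu.2.ne, div_neg, ← neg_div, neg_sub]

lemma integrable_rpow_prod (a : ℝ) :
    Integrable (Function.uncurry fun u s : ℝ => u ^ s)
      ((volume.restrict (Ioo 0 1)).prod (volume.restrict (Ioo 0 a))) := by
  refine Integrable.of_bound (by fun_prop) 1 ?_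
  rw [Measure.prod_restrict]
  refine ae_restrict_of_forall_mem (measurableSet_Ioo.prod measurableSet_Ioo) fun p hp => ?_
  rw [Function.uncurry_apply_pair, norm_of_nonneg (rpow_nonneg hp.1.1.le _)]
  exact rpow_le_one hp.1.1.le hp.1.2.le hp.2.1.le

lemma integrableOn_one_sub_rpow_div_neg_log {a : ℝ} (ha : 0 ≤ a) :
    IntegrableOn (fun u => (1 - u ^ a) / -log u) (Ioo 0 1) :=
  (integrable_rpow_prod a).integral_prod_left.congr <|
    ae_restrict_of_forall_mem measurableSet_Ioo fun _ hu =>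
      (one_sub_rpow_div_neg_log_eq_integral hu ha).symm

lemma integral_one_sub_rpow_div_neg_log {a : ℝ} (ha : 0 ≤ a) :
    ∫ u in Ioo (0:ℝ) 1, (1 - u ^ a) / -log u = log (1 + a) := by
  calc ∫ u in Ioo (0:ℝ) 1, (1 - u ^ a) / -log u
      = ∫ u in Ioo (0:ℝ) 1, ∫ s in Ioo 0 a, u ^ s :=
        setIntegral_congr_fun measurableSet_Ioo fun u hu =>
          one_sub_rpow_div_neg_log_eq_integral hu ha
    _ = ∫ s in Ioo 0 a, ∫ u in Ioo (0:ℝ) 1, u ^ s :=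
        integral_integral_swap (integrable_rpow_prod a)
    _ = ∫ s in Ioo 0 a, (1 + s)⁻¹ :=
        setIntegral_congr_fun measurableSet_Ioo fun s hs =>
          integral_rpow_Ioo_zero_one (by linarith [hs.1])
    _ = log (1 + a) := by
        rw [← integral_Ioc_eq_integral_Ioo, ← intervalIntegral.integral_of_le ha,
          intervalIntegral.integral_comp_add_left (fun s => s⁻¹), add_zero,
          integral_inv_of_pos one_pos (by linarith), div_one]

lemma one_sub_pow_div_log_eq_neg (u : ℝ) (n : ℕ) :
    (1 - u ^ n) / log u = -((1 - u ^ (n : ℝ)) / -log u) := by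
  rw [rpow_natCast, div_neg, neg_neg]

lemma integral_one_sub_pow_mul_eulerKernel (n : ℕ) :
    ∫ u in Ioo (0:ℝ) 1, (1 - u ^ n) * eulerKernel u = harmonic n - log (n + 1) := by
  have hgeom : IntegrableOn (fun u : ℝ => ∑ k ∈ Finset.range n, u ^ k) (Ioo 0 1) :=
    (continuous_finsetSum _ fun k _ => continuous_pow k).integrableOn_Icc.mono_set
      Ioo_subset_Icc_self
  have hlog : IntegrableOn (fun u : ℝ => (1 - u ^ n) / log u) (Ioo 0 1) :=
    (integrableOn_one_sub_rpow_div_neg_log n.cast_nonneg).neg.congr_fun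
      (fun u _ => (one_sub_pow_div_log_eq_neg u n).symm) measurableSet_Ioo
  calc ∫ u in Ioo (0:ℝ) 1, (1 - u ^ n) * eulerKernel u
      = ∫ u in Ioo (0:ℝ) 1, (∑ k ∈ Finset.range n, u ^ k + (1 - u ^ n) / log u) :=
        setIntegral_congr_fun measurableSet_Ioo fun u hu => one_sub_pow_mul_eulerKernel hu n
    _ = harmonic n - log (n + 1) := by
        rw [integral_add hgeom hlog, integral_geom_sum_eq_harmonic]
        simp only [one_sub_pow_div_log_eq_neg]
        rw [integral_neg, integral_one_sub_rpow_div_neg_log n.cast_nonneg, add_comm (1 : ℝ),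
          sub_eq_add_neg]

lemma integral_eulerKernel : ∫ u in Ioo (0:ℝ) 1, eulerKernel u = eulerMascheroniConstant := by
  have hlim : Tendsto (fun n : ℕ => ∫ u in Ioo (0:ℝ) 1, (1 - u ^ n) * eulerKernel u) atTop
      (𝓝 (∫ u in Ioo (0:ℝ) 1, eulerKernel u)) := by
    refine tendsto_integral_of_dominated_convergence (fun _ => 1)
      (fun n => (by fun_prop : Continuous fun u : ℝ => 1 - u ^ n).aestronglyMeasurable.mul
        measurable_eulerKernel.aestronglyMeasurable) (integrable_const 1)
      (fun n => ae_restrict_of_forall_mem measurableSet_Ioo fun u hu => ?_)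
      (ae_restrict_of_forall_mem measurableSet_Ioo fun u hu => ?_)
    · obtain ⟨hK0, hK1⟩ := eulerKernel_mem_Icc hu
      have hp0 : 0 ≤ u ^ n := pow_nonneg hu.1.le n
      have hp1 : u ^ n ≤ 1 := pow_le_one₀ hu.1.le hu.2.le
      rw [norm_of_nonneg (by nlinarith)]
      nlinarith
    · simpa using ((tendsto_pow_atTop_nhds_zero_of_lt_one hu.1.le hu.2).const_sub 1).mul_const
        (eulerKernel u)
  simp only [integral_one_sub_pow_mul_eulerKernel] at hlim
  exact tendsto_nhds_unique hlim tendsto_harmonic_sub_log_add_one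

lemma integrableOn_eulerKernel : IntegrableOn eulerKernel (Ioo 0 1) :=
  IntegrableOn.of_bound measure_Ioo_lt_top measurable_eulerKernel.aestronglyMeasurable 1 <|
    ae_restrict_of_forall_mem measurableSet_Ioo fun u hu => by
      obtain ⟨h0, h1⟩ := eulerKernel_mem_Icc hu
      rwa [norm_of_nonneg h0]

lemma lintegral_eulerKernel :
    ∫⁻ u in Ioo (0:ℝ) 1, ENNReal.ofReal (eulerKernel u)
      = ENNReal.ofReal eulerMascheroniConstant := by
  rw [← ofReal_integral_eq_lintegral_ofReal integrableOn_eulerKernel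
    (ae_restrict_of_forall_mem measurableSet_Ioo fun u hu => (eulerKernel_mem_Icc hu).1),
    integral_eulerKernel]

noncomputable def weight (u : ℝ) : ℝ := ((1 - u) * -log u)⁻¹

lemma weight_nonneg {u : ℝ} (hu : u ∈ Ioo (0:ℝ) 1) : 0 ≤ weight u :=
  inv_nonneg.2 <| mul_nonneg (sub_nonneg.2 hu.2.le) (neg_nonneg.2 (log_nonpos hu.1.le hu.2.le))

lemma monotoneOn_weight : MonotoneOn weight (Ioo 0 1) := fun _ hu _ hx hux =>
  inv_anti₀ (mul_pos (sub_pos.2 hx.2) (neg_pos.2 (log_neg hx.1 hx.2))) <|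
    mul_le_mul (sub_le_sub_left hux 1) (neg_le_neg (log_le_log hu.1 hux))
      (neg_nonneg.2 (log_nonpos hx.1.le hx.2.le)) (sub_nonneg.2 hu.2.le)

lemma integrableOn_weight {x : ℝ} (hx : x ∈ Ioo (0:ℝ) 1) : IntegrableOn weight (Ioo 0 x) := by
  refine IntegrableOn.of_bound measure_Ioo_lt_top (by unfold weight; fun_prop) (weight x) <|
    ae_restrict_of_forall_mem measurableSet_Ioo fun u hu => ?_
  have hu' : u ∈ Ioo (0:ℝ) 1 := ⟨hu.1, hu.2.trans hx.2⟩
  rw [norm_of_nonneg (weight_nonneg hu')]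
  exact monotoneOn_weight hu' hx hu.2.le

lemma integral_sondow_inner {x : ℝ} (hx : x ∈ Ioo (0:ℝ) 1) :
    ∫ y in Ioo (0:ℝ) 1, (1 - x) / ((1 - x * y) * -log (x * y))
      = (1 - x) / x * ∫ u in Ioo 0 x, weight u := by
  have hy : ∀ y, (1 - x) / ((1 - x * y) * -log (x * y)) = (1 - x) * weight (x * y) :=
    fun y => div_eq_mul_inv _ _
  simp only [hy]
  rw [integral_const_mul, div_eq_mul_inv, mul_assoc]
  congr 1
  rw [← integral_Ioc_eq_integral_Ioo, ← intervalIntegral.integral_of_le zero_le_one,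
    intervalIntegral.integral_comp_mul_left weight hx.1.ne', mul_zero, mul_one, smul_eq_mul,
    intervalIntegral.integral_of_le hx.1.le, integral_Ioc_eq_integral_Ioo]

lemma lintegral_mul_lintegral_Ioo_comm {μ : Measure ℝ} [SFinite μ] {f g : ℝ → ℝ≥0∞}
    (hf : Measurable f) (hg : Measurable g) (a b : ℝ) :
    ∫⁻ x in Ioo a b, f x * ∫⁻ u in Ioo a x, g u ∂μ ∂μ
      = ∫⁻ u in Ioo a b, g u * ∫⁻ x in Ioo u b, f x ∂μ ∂μ := by
  let F : ℝ → ℝ → ℝ≥0∞ := fun x u => (Iio x).indicator (fun u => f x * g u) u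
  have hF : Measurable (Function.uncurry F) :=
    (hf.comp measurable_fst |>.mul (hg.comp measurable_snd)).ite
      (measurableSet_lt measurable_snd measurable_fst) measurable_const
  have hx : ∀ x ∈ Ioo a b, f x * ∫⁻ u in Ioo a x, g u ∂μ = ∫⁻ u in Ioo a b, F x u ∂μ :=
    fun x hx => by
      rw [lintegral_indicator measurableSet_Iio, Measure.restrict_restrict measurableSet_Iio,
        Iio_inter_Ioo, min_eq_left hx.2.le, lintegral_const_mul _ hg]
  have hu : ∀ u ∈ Ioo a b, g u * ∫⁻ x in Ioo u b, f x ∂μ = ∫⁻ x in Ioo a b, F x u ∂μ :=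
    fun u hu => by
      have : ∀ x, F x u = (Ioi u).indicator (fun x => f x * g u) x := fun x => by
        simp only [F, indicator_apply, mem_Iio, mem_Ioi]
      simp only [this]
      rw [lintegral_indicator measurableSet_Ioi, Measure.restrict_restrict measurableSet_Ioi,
        Ioi_inter_Ioo, max_eq_left hu.1.le, lintegral_mul_const _ hf, mul_comm]
  rw [setLIntegral_congr_fun measurableSet_Ioo hx, setLIntegral_congr_fun measurableSet_Ioo hu,
    lintegral_lintegral_swap hF.aemeasurable]

lemma integral_one_sub_div_self {u : ℝ} (hu : u ∈ Ioo (0:ℝ) 1) :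
    ∫ x in Ioo u 1, (1 - x) / x = u - 1 - log u := by
  have hx : ∀ x ∈ Ioo u 1, (1 - x) / x = x⁻¹ - 1 := fun x hx => by
    field_simp [(hu.1.trans hx.1).ne']
  have hinv : IntervalIntegrable (fun x : ℝ => x⁻¹) volume u 1 :=
    intervalIntegral.intervalIntegrable_inv
      (fun x hx => ((lt_min hu.1 one_pos).trans_le hx.1).ne') continuousOn_id
  rw [setIntegral_congr_fun measurableSet_Ioo hx, ← integral_Ioc_eq_integral_Ioo,
    ← intervalIntegral.integral_of_le hu.2.le,
    intervalIntegral.integral_sub hinv intervalIntegrable_const, integral_inv_of_pos hu.1 one_pos,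
    intervalIntegral.integral_const, one_div, log_inv, smul_eq_mul, mul_one]
  ring

lemma weight_mul_eq_eulerKernel {u : ℝ} (hu : u ∈ Ioo (0:ℝ) 1) :
    weight u * (u - 1 - log u) = eulerKernel u := by
  have h1 : 1 - u ≠ 0 := (sub_pos.2 hu.2).ne'
  have h2 : log u ≠ 0 := (log_neg hu.1 hu.2).ne
  rw [weight, eulerKernel]
  field_simp
  ring

lemma ofReal_integral_sondow_inner {x : ℝ} (hx : x ∈ Ioo (0:ℝ) 1) :
    ENNReal.ofReal (∫ y in Ioo (0:ℝ) 1, (1 - x) / ((1 - x * y) * -log (x * y)))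
      = ENNReal.ofReal ((1 - x) / x) * ∫⁻ u in Ioo 0 x, ENNReal.ofReal (weight u) := by
  rw [integral_sondow_inner hx, ENNReal.ofReal_mul (div_nonneg (sub_nonneg.2 hx.2.le) hx.1.le),
    ofReal_integral_eq_lintegral_ofReal (integrableOn_weight hx)
      (ae_restrict_of_forall_mem measurableSet_Ioo fun u hu =>
        weight_nonneg ⟨hu.1, hu.2.trans hx.2⟩)]

lemma ofReal_weight_mul_lintegral {u : ℝ} (hu : u ∈ Ioo (0:ℝ) 1) :
    ENNReal.ofReal (weight u) * ∫⁻ x in Ioo u 1, ENNReal.ofReal ((1 - x) / x)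
      = ENNReal.ofReal (eulerKernel u) := by
  have hint : IntegrableOn (fun x : ℝ => (1 - x) / x) (Ioo u 1) :=
    ((continuousOn_const.sub continuousOn_id).div continuousOn_id
      fun x hx => (hu.1.trans_le hx.1).ne').integrableOn_Icc.mono_set Ioo_subset_Icc_self
  rw [← ofReal_integral_eq_lintegral_ofReal hint (ae_restrict_of_forall_mem measurableSet_Ioo
      fun x hx => div_nonneg (sub_nonneg.2 hx.2.le) (hu.1.trans hx.1).le),
    integral_one_sub_div_self hu, ← ENNReal.ofReal_mul (weight_nonneg hu),
    weight_mul_eq_eulerKernel hu]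

end Sondow

theorem sondow_gamma :
    Real.eulerMascheroniConstant
      = ∫ x in Set.Ioo (0:ℝ) 1, ∫ y in Set.Ioo (0:ℝ) 1,
          (1 - x) / ((1 - x * y) * (-Real.log (x * y))) ∂volume ∂volume := by
  have hmeas : StronglyMeasurable (Function.uncurry fun x y : ℝ =>
      (1 - x) / ((1 - x * y) * (-Real.log (x * y)))) := by
    apply Measurable.stronglyMeasurable
    fun_prop
  have hnonneg : ∀ x ∈ Ioo (0:ℝ) 1,
      0 ≤ ∫ y in Ioo (0:ℝ) 1, (1 - x) / ((1 - x * y) * (-Real.log (x * y))) := fun x hx => by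
    rw [Sondow.integral_sondow_inner hx]
    exact mul_nonneg (div_nonneg (sub_nonneg.2 hx.2.le) hx.1.le) <| setIntegral_nonneg
      measurableSet_Ioo fun u hu => Sondow.weight_nonneg ⟨hu.1, hu.2.trans hx.2⟩
  rw [integral_eq_lintegral_of_nonneg_ae (ae_restrict_of_forall_mem measurableSet_Ioo hnonneg)
      hmeas.integral_prod_right.aestronglyMeasurable,
    setLIntegral_congr_fun measurableSet_Ioo fun x hx => Sondow.ofReal_integral_sondow_inner hx,
    Sondow.lintegral_mul_lintegral_Ioo_comm (by fun_prop) (by unfold Sondow.weight; fun_prop),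
    setLIntegral_congr_fun measurableSet_Ioo fun u hu => Sondow.ofReal_weight_mul_lintegral hu,
    Sondow.lintegral_eulerKernel,
    ENNReal.toReal_ofReal (one_half_pos.trans one_half_lt_eulerMascheroniConstant).le]
end

section
/- ln(4/π) = ∫₀¹∫₀¹ (1-x₁)/((1 + x₁x₂)(-ln(x₁x₂))) dx₁ dx₂. -/
/-!
Write `r = x y`. For `0 < r < 1` the geometric series `1 / (1 + r) = ∑ₖ (1 - r) r ^ (2k)` and
`∫_c^∞ r ^ s ds = r ^ c / (-log r)` give `1 / ((1 + r) (-log r)) = ∑ₖ ∫_{2k}^∞ (1 - r) r ^ s ds`.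
Every term is nonnegative, so by Tonelli the double integral is `∑ₖ ∫_{2k}^∞ moment s ds`, where
`moment a = ∫∫ (1 - x) (1 - x y) (x y) ^ a` is a rational function of `a` with an elementary
antiderivative. The `k`-th tail integral is `1 / (2k + 1) - 1 / (2k + 2)`, summing to `log 2`
(through harmonic numbers and the Euler–Mascheroni limit), minus the logarithm of the `k`-th
Wallis factor, summing to `-log (π / 2)`.
-/

open MeasureTheory Set Filter Real Topology
open scoped ENNReal

namespace Sondow

section IteratedIntegral

variable {α β γ : Type*} [MeasurableSpace α] [MeasurableSpace β] [MeasurableSpace γ]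
  {μ : Measure α} {ν : Measure β}

theorem ofReal_integral_integral_eq_lintegral_lintegral_ofReal {f : α → β → ℝ}
    (hf_nonneg : ∀ᵐ x ∂μ, 0 ≤ᵐ[ν] f x) (hf_int : ∀ᵐ x ∂μ, Integrable (f x) ν)
    (hf : Integrable (fun x ↦ ∫ y, f x y ∂ν) μ) :
    ENNReal.ofReal (∫ x, ∫ y, f x y ∂ν ∂μ) = ∫⁻ x, ∫⁻ y, ENNReal.ofReal (f x y) ∂ν ∂μ := by
  rw [ofReal_integral_eq_lintegral_ofReal hf
    (hf_nonneg.mono fun x hx ↦ integral_nonneg_of_ae hx)]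
  exact lintegral_congr_ae <| (hf_nonneg.and hf_int).mono fun x hx ↦
    ofReal_integral_eq_lintegral_ofReal hx.2 hx.1

theorem integral_integral_eq_of_lintegral_lintegral_ofReal [SFinite ν] {f : α → β → ℝ}
    (hf : Measurable (Function.uncurry f)) (hf_nonneg : ∀ᵐ x ∂μ, 0 ≤ᵐ[ν] f x) {c : ℝ}
    (hc : 0 ≤ c) (h : ∫⁻ x, ∫⁻ y, ENNReal.ofReal (f x y) ∂ν ∂μ = ENNReal.ofReal c) :
    ∫ x, ∫ y, f x y ∂ν ∂μ = c := by
  have hF : Measurable fun x ↦ ∫⁻ y, ENNReal.ofReal (f x y) ∂ν :=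
    (ENNReal.measurable_ofReal.comp hf).lintegral_prod_right'
  calc ∫ x, ∫ y, f x y ∂ν ∂μ = ∫ x, (∫⁻ y, ENNReal.ofReal (f x y) ∂ν).toReal ∂μ :=
        integral_congr_ae <| hf_nonneg.mono fun x hx ↦
          integral_eq_lintegral_of_nonneg_ae hx
            (hf.comp measurable_prodMk_left).aestronglyMeasurable
    _ = c := by
        rw [integral_toReal hF.aemeasurable (ae_lt_top hF (h ▸ ENNReal.ofReal_ne_top)), h,
          ENNReal.toReal_ofReal hc]

theorem lintegral_lintegral_tsum_lintegral_swap [SFinite μ] [SFinite ν] {ρ : ℕ → Measure γ}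
    [∀ k, SFinite (ρ k)] {g : α → β → γ → ℝ≥0∞}
    (hg : Measurable fun p : α × β × γ ↦ g p.1 p.2.1 p.2.2) :
    ∫⁻ x, ∫⁻ y, ∑' k, ∫⁻ z, g x y z ∂ρ k ∂ν ∂μ = ∑' k, ∫⁻ z, ∫⁻ x, ∫⁻ y, g x y z ∂ν ∂μ ∂ρ k := by
  have hg' : Measurable fun p : (α × β) × γ ↦ g p.1.1 p.1.2 p.2 :=
    hg.comp (by fun_prop : Measurable fun p : (α × β) × γ ↦ (p.1.1, p.1.2, p.2))
  have h_inner (k : ℕ) : Measurable fun q : α × β ↦ ∫⁻ z, g q.1 q.2 z ∂ρ k :=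
    hg'.lintegral_prod_right'
  calc ∫⁻ x, ∫⁻ y, ∑' k, ∫⁻ z, g x y z ∂ρ k ∂ν ∂μ
        = ∫⁻ x, ∑' k, ∫⁻ y, ∫⁻ z, g x y z ∂ρ k ∂ν ∂μ := lintegral_congr fun x ↦
          lintegral_tsum fun k ↦ ((h_inner k).comp measurable_prodMk_left).aemeasurable
    _ = ∑' k, ∫⁻ x, ∫⁻ y, ∫⁻ z, g x y z ∂ρ k ∂ν ∂μ :=
          lintegral_tsum fun k ↦ (h_inner k).lintegral_prod_right'.aemeasurable
    _ = ∑' k, ∫⁻ z, ∫⁻ x, ∫⁻ y, g x y z ∂ν ∂μ ∂ρ k := tsum_congr fun k ↦ by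
          rw [lintegral_congr fun x ↦ lintegral_lintegral_swap
            (hg.comp (by fun_prop : Measurable fun q : β × γ ↦ (x, q))).aemeasurable]
          exact lintegral_lintegral_swap <|
            (hg.comp (by fun_prop : Measurable fun q : (α × γ) × β ↦ (q.1.1, q.2, q.1.2))
              ).lintegral_prod_right'.aemeasurable

end IteratedIntegral

section UnitInterval

variable {b : ℝ}

theorem integrableOn_Ioo_rpow (hb : -1 < b) : IntegrableOn (fun x : ℝ ↦ x ^ b) (Ioo 0 1) :=
  (intervalIntegral.integrableOn_Ioo_rpow_iff one_pos).2 hb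

theorem integral_Ioo_rpow (hb : -1 < b) : ∫ x in Ioo (0 : ℝ) 1, x ^ b = (b + 1)⁻¹ := by
  rw [← integral_Ioc_eq_integral_Ioo, ← intervalIntegral.integral_of_le zero_le_one,
    integral_rpow (Or.inl hb), one_rpow, zero_rpow (by linarith), sub_zero, one_div]

theorem integrableOn_Ioo_one_sub_mul_mul_rpow (c : ℝ) (hb : -1 < b) :
    IntegrableOn (fun x : ℝ ↦ (1 - c * x) * x ^ b) (Ioo 0 1) :=
  (integrableOn_Ioo_rpow hb).continuousOn_mul_of_subset (by fun_prop) isCompact_Icc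
    measurableSet_Ioo Ioo_subset_Icc_self

theorem integral_Ioo_one_sub_mul_mul_rpow (c : ℝ) (hb : -1 < b) :
    ∫ x in Ioo (0 : ℝ) 1, (1 - c * x) * x ^ b = (b + 1)⁻¹ - c * (b + 2)⁻¹ := by
  have h_eq : EqOn (fun x : ℝ ↦ (1 - c * x) * x ^ b) (fun x ↦ x ^ b - c * x ^ (b + 1))
      (Ioo 0 1) := fun x hx ↦ by
    simp only [rpow_add_one hx.1.ne']
    ring
  have hb' : -1 < b + 1 := by linarith
  rw [setIntegral_congr_fun measurableSet_Ioo h_eq,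
    integral_sub (integrableOn_Ioo_rpow hb) ((integrableOn_Ioo_rpow hb').const_mul c),
    integral_const_mul, integral_Ioo_rpow hb, integral_Ioo_rpow hb']
  ring_nf

end UnitInterval

noncomputable def moment (a : ℝ) : ℝ := ((a + 1) ^ 2 * (a + 2))⁻¹ - ((a + 2) ^ 2 * (a + 3))⁻¹

section Moment

variable {a : ℝ}

theorem moment_integrand_eqOn {x : ℝ} (hx : 0 < x) :
    EqOn (fun y ↦ (1 - x) * (1 - x * y) * (x * y) ^ a)
      (fun y ↦ (1 - x) * x ^ a * ((1 - x * y) * y ^ a)) (Ioo 0 1) := fun y hy ↦ by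
  simp only [mul_rpow hx.le hy.1.le]
  ring

theorem moment_integrand_nonneg {x y : ℝ} (hx : x ∈ Ioo (0 : ℝ) 1) (hy : y ∈ Ioo (0 : ℝ) 1) :
    0 ≤ (1 - x) * (1 - x * y) * (x * y) ^ a := by
  have hxy : x * y < 1 := mul_lt_one_of_nonneg_of_lt_one_left hx.1.le hx.2 hy.2.le
  have : 0 ≤ (x * y) ^ a := rpow_nonneg (mul_pos hx.1 hy.1).le a
  have : 0 ≤ 1 - x := by linarith [hx.2]
  have : 0 ≤ 1 - x * y := by linarith
  positivity

theorem lintegral_moment_integrand (ha : -1 < a) :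
    ∫⁻ x in Ioo (0 : ℝ) 1, ∫⁻ y in Ioo (0 : ℝ) 1,
      ENNReal.ofReal ((1 - x) * (1 - x * y) * (x * y) ^ a) = ENNReal.ofReal (moment a) := by
  have h_inner : ∀ x ∈ Ioo (0 : ℝ) 1, ∫ y in Ioo (0 : ℝ) 1, (1 - x) * (1 - x * y) * (x * y) ^ a
      = (a + 1)⁻¹ * ((1 - 1 * x) * x ^ a) - (a + 2)⁻¹ * ((1 - 1 * x) * x ^ (a + 1)) :=
    fun x hx ↦ by
      rw [setIntegral_congr_fun measurableSet_Ioo (moment_integrand_eqOn hx.1),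
        integral_const_mul, integral_Ioo_one_sub_mul_mul_rpow x ha, rpow_add_one hx.1.ne']
      ring
  have ha' : -1 < a + 1 := by linarith
  rw [← ofReal_integral_integral_eq_lintegral_lintegral_ofReal,
    setIntegral_congr_fun measurableSet_Ioo h_inner,
    integral_sub ((integrableOn_Ioo_one_sub_mul_mul_rpow 1 ha).const_mul _)
      ((integrableOn_Ioo_one_sub_mul_mul_rpow 1 ha').const_mul _),
    integral_const_mul, integral_const_mul, integral_Ioo_one_sub_mul_mul_rpow 1 ha,
    integral_Ioo_one_sub_mul_mul_rpow 1 ha', moment]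
  · have : a + 1 ≠ 0 := by linarith
    have : a + 2 ≠ 0 := by linarith
    have : a + 3 ≠ 0 := by linarith
    congr 1
    rw [show a + 1 + 1 = a + 2 by ring, show a + 1 + 2 = a + 3 by ring]
    field_simp
    ring
  · exact (ae_restrict_mem measurableSet_Ioo).mono fun x hx ↦
      (ae_restrict_mem measurableSet_Ioo).mono fun y hy ↦ moment_integrand_nonneg hx hy
  · refine (ae_restrict_mem measurableSet_Ioo).mono fun x hx ↦ ?_
    exact IntegrableOn.congr_fun ((integrableOn_Ioo_one_sub_mul_mul_rpow x ha).const_mul _)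
      (moment_integrand_eqOn hx.1).symm measurableSet_Ioo
  · exact IntegrableOn.congr_fun
      (((integrableOn_Ioo_one_sub_mul_mul_rpow 1 ha).const_mul _).sub
        ((integrableOn_Ioo_one_sub_mul_mul_rpow 1 ha').const_mul _))
      (fun x hx ↦ (h_inner x hx).symm) measurableSet_Ioo

end Moment

section Laplace

variable {r : ℝ}

theorem lintegral_Ioi_rpow (hr₀ : 0 < r) (hr₁ : r < 1) (c : ℝ) :
    ∫⁻ s in Ioi c, ENNReal.ofReal (r ^ s) = ENNReal.ofReal (r ^ c / -log r) := by
  have hlog : log r < 0 := log_neg hr₀ hr₁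
  simp only [rpow_def_of_pos hr₀]
  rw [← ofReal_integral_eq_lintegral_ofReal (integrableOn_exp_mul_Ioi hlog c)
    (Eventually.of_forall fun s ↦ (exp_pos _).le), integral_exp_mul_Ioi hlog c, div_neg,
    neg_div]

theorem ofReal_div_one_add_mul_neg_log_eq_tsum {C : ℝ} (hC : 0 ≤ C) (hr₀ : 0 < r)
    (hr₁ : r < 1) :
    ENNReal.ofReal (C / ((1 + r) * -log r))
      = ∑' k : ℕ, ∫⁻ s in Ioi (2 * (k : ℝ)), ENNReal.ofReal (C * (1 - r) * r ^ s) := by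
  have hlog : 0 < -log r := neg_pos.2 (log_neg hr₀ hr₁)
  have hD : 0 ≤ C * (1 - r) := mul_nonneg hC (by linarith)
  have h_term (k : ℕ) : ∫⁻ s in Ioi (2 * (k : ℝ)), ENNReal.ofReal (C * (1 - r) * r ^ s)
      = ENNReal.ofReal (C * (1 - r) / -log r * (r ^ 2) ^ k) := by
    simp only [ENNReal.ofReal_mul hD]
    rw [lintegral_const_mul' _ _ ENNReal.ofReal_ne_top, lintegral_Ioi_rpow hr₀ hr₁,
      ← ENNReal.ofReal_mul hD, rpow_mul hr₀.le, rpow_two, rpow_natCast]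
    ring_nf
  have h_sum :
      HasSum (fun k : ℕ ↦ C * (1 - r) / -log r * (r ^ 2) ^ k) (C / ((1 + r) * -log r)) := by
    have h_geom := (hasSum_geometric_of_lt_one (sq_nonneg r) (by nlinarith)).mul_left
      (C * (1 - r) / -log r)
    have : 1 + r ≠ 0 := by linarith
    have : 1 - r ≠ 0 := by linarith
    rwa [show C * (1 - r) / -log r * (1 - r ^ 2)⁻¹ = C / ((1 + r) * -log r) by
      rw [show 1 - r ^ 2 = (1 - r) * (1 + r) by ring]; field_simp] at h_geom
  simp only [h_term]
  rw [← ENNReal.ofReal_tsum_of_nonneg (fun k ↦ by positivity) h_sum.summable, h_sum.tsum_eq]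

end Laplace

noncomputable def momentTail (c : ℝ) : ℝ :=
  (c + 1)⁻¹ - (c + 2)⁻¹ + log (c + 1) - 2 * log (c + 2) + log (c + 3)

section MomentTail

variable {a c : ℝ}

theorem moment_nonneg (ha : -1 < a) : 0 ≤ moment a := by
  have : 0 < a + 1 := by linarith
  have : 0 < a + 2 := by linarith
  rw [moment, sub_nonneg]
  exact inv_anti₀ (by positivity) (by nlinarith)

theorem hasDerivAt_neg_momentTail (ha : -1 < a) :
    HasDerivAt (fun c ↦ -momentTail c) (moment a) a := by
  have h₁ : a + 1 ≠ 0 := by linarith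
  have h₂ : a + 2 ≠ 0 := by linarith
  have h₃ : a + 3 ≠ 0 := by linarith
  have hlin (d : ℝ) : HasDerivAt (fun c : ℝ ↦ c + d) 1 a := (hasDerivAt_id a).add_const d
  have := ((((((hlin 1).inv h₁).sub ((hlin 2).inv h₂)).add ((hlin 1).log h₁)).sub
    (((hlin 2).log h₂).const_mul 2)).add ((hlin 3).log h₃)).neg
  refine (this.congr_deriv ?_).congr_of_eventuallyEq (Eventually.of_forall fun c ↦ ?_)
  · rw [moment]
    field_simp
    ring
  · simp only [momentTail, Pi.neg_apply, Pi.add_apply, Pi.sub_apply, Pi.inv_apply]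

theorem tendsto_momentTail : Tendsto momentTail atTop (𝓝 0) := by
  have h_inv (d : ℝ) : Tendsto (fun c : ℝ ↦ (c + d)⁻¹) atTop (𝓝 0) :=
    tendsto_inv_atTop_zero.comp (tendsto_atTop_add_const_right _ d tendsto_id)
  have h_log := ((tendsto_log_comp_add_sub_log 1).sub (tendsto_log_comp_add_sub_log 2)).sub
    ((tendsto_log_comp_add_sub_log 2).sub (tendsto_log_comp_add_sub_log 3))
  have := ((h_inv 1).sub (h_inv 2)).add h_log
  simp only [sub_zero, add_zero] at this
  refine this.congr fun c ↦ ?_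
  rw [momentTail]
  ring

theorem integral_Ioi_moment (hc : -1 < c) : ∫ s in Ioi c, moment s = momentTail c := by
  rw [integral_Ioi_of_hasDerivAt_of_nonneg' (fun a ha ↦ hasDerivAt_neg_momentTail (by
    linarith [mem_Ici.1 ha])) (fun a ha ↦ moment_nonneg (hc.trans ha)) tendsto_momentTail.neg]
  ring

theorem momentTail_nonneg (hc : -1 < c) : 0 ≤ momentTail c :=
  integral_Ioi_moment hc ▸ setIntegral_nonneg measurableSet_Ioi fun _ hs ↦
    moment_nonneg (hc.trans hs)

theorem lintegral_Ioi_moment (hc : -1 < c) :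
    ∫⁻ s in Ioi c, ENNReal.ofReal (moment s) = ENNReal.ofReal (momentTail c) := by
  rw [← integral_Ioi_moment hc, ofReal_integral_eq_lintegral_ofReal]
  · exact integrableOn_Ioi_deriv_of_nonneg' (fun a ha ↦ hasDerivAt_neg_momentTail (by
      linarith [mem_Ici.1 ha])) (fun a ha ↦ moment_nonneg (hc.trans ha)) tendsto_momentTail.neg
  · exact (ae_restrict_mem measurableSet_Ioi).mono fun s hs ↦ moment_nonneg (hc.trans hs)

end MomentTail

theorem sum_range_inv_odd_sub_inv_even (N : ℕ) :
    ∑ k ∈ Finset.range N, ((2 * (k : ℝ) + 1)⁻¹ - (2 * (k : ℝ) + 2)⁻¹)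
      = harmonic (2 * N) - harmonic N := by
  induction N with
  | zero => simp
  | succ N ih =>
    rw [Finset.sum_range_succ, ih, show 2 * (N + 1) = 2 * N + 1 + 1 by ring, harmonic_succ,
      harmonic_succ, harmonic_succ]
    push_cast
    have : (N : ℝ) + 1 ≠ 0 := by positivity
    field_simp
    ring

theorem tendsto_harmonic_two_mul_sub_harmonic :
    Tendsto (fun N : ℕ ↦ (harmonic (2 * N) - harmonic N : ℝ)) atTop (𝓝 (log 2)) := by
  have h_two : Tendsto (fun N : ℕ ↦ 2 * N) atTop atTop :=
    tendsto_id.const_mul_atTop' two_pos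
  have := ((tendsto_harmonic_sub_log.comp h_two).sub tendsto_harmonic_sub_log).const_add (log 2)
  rw [sub_self, add_zero] at this
  refine this.congr' ((eventually_ne_atTop 0).mono fun N hN ↦ ?_)
  simp only [Function.comp_apply, Nat.cast_mul, Nat.cast_ofNat]
  rw [log_mul two_ne_zero (by exact_mod_cast hN)]
  ring

theorem momentTail_two_mul (k : ℕ) :
    momentTail (2 * k) = ((2 * (k : ℝ) + 1)⁻¹ - (2 * (k : ℝ) + 2)⁻¹)
      - log ((2 * k + 2) / (2 * k + 1) * ((2 * k + 2) / (2 * k + 3))) := by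
  have h₁ : (0 : ℝ) < 2 * k + 1 := by positivity
  have h₂ : (0 : ℝ) < 2 * k + 2 := by positivity
  have h₃ : (0 : ℝ) < 2 * k + 3 := by positivity
  rw [momentTail, log_mul (by positivity) (by positivity), log_div h₂.ne' h₁.ne',
    log_div h₂.ne' h₃.ne']
  ring

theorem hasSum_momentTail_two_mul :
    HasSum (fun k : ℕ ↦ momentTail (2 * k)) (log (4 / π)) := by
  rw [hasSum_iff_tendsto_nat_of_nonneg fun k ↦
    momentTail_nonneg (neg_one_lt_zero.trans_le (by positivity))]
  have h_wallis := tendsto_prod_pi_div_two.log (by positivity)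
  have := tendsto_harmonic_two_mul_sub_harmonic.sub h_wallis
  rw [← log_div two_ne_zero (by positivity), div_div_eq_mul_div,
    show (2 : ℝ) * 2 = 4 by norm_num] at this
  refine this.congr fun N ↦ ?_
  rw [log_prod, ← sum_range_inv_odd_sub_inv_even, ← Finset.sum_sub_distrib]
  · simp only [momentTail_two_mul]
  · intro k _
    positivity

theorem lintegral_sondow_integrand :
    ∫⁻ x in Ioo (0 : ℝ) 1, ∫⁻ y in Ioo (0 : ℝ) 1,
      ENNReal.ofReal ((1 - x) / ((1 + x * y) * -log (x * y))) = ENNReal.ofReal (log (4 / π)) := by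
  have h_expand : ∀ x ∈ Ioo (0 : ℝ) 1, ∀ y ∈ Ioo (0 : ℝ) 1,
      ENNReal.ofReal ((1 - x) / ((1 + x * y) * -log (x * y)))
        = ∑' k : ℕ, ∫⁻ s in Ioi (2 * (k : ℝ)),
            ENNReal.ofReal ((1 - x) * (1 - x * y) * (x * y) ^ s) := fun x hx y hy ↦
    ofReal_div_one_add_mul_neg_log_eq_tsum (by linarith [hx.2]) (mul_pos hx.1 hy.1)
      (mul_lt_one_of_nonneg_of_lt_one_left hx.1.le hx.2 hy.2.le)
  have h_tail : ∀ k : ℕ, -1 < 2 * (k : ℝ) := fun k ↦ neg_one_lt_zero.trans_le (by positivity)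
  calc _ = ∫⁻ x in Ioo (0 : ℝ) 1, ∫⁻ y in Ioo (0 : ℝ) 1, ∑' k : ℕ, ∫⁻ s in Ioi (2 * (k : ℝ)),
          ENNReal.ofReal ((1 - x) * (1 - x * y) * (x * y) ^ s) :=
        setLIntegral_congr_fun measurableSet_Ioo fun x hx ↦
          setLIntegral_congr_fun measurableSet_Ioo (h_expand x hx)
    _ = ∑' k : ℕ, ∫⁻ s in Ioi (2 * (k : ℝ)), ∫⁻ x in Ioo (0 : ℝ) 1, ∫⁻ y in Ioo (0 : ℝ) 1,
          ENNReal.ofReal ((1 - x) * (1 - x * y) * (x * y) ^ s) :=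
        lintegral_lintegral_tsum_lintegral_swap (by fun_prop)
    _ = ∑' k : ℕ, ENNReal.ofReal (momentTail (2 * k)) := tsum_congr fun k ↦ by
        rw [setLIntegral_congr_fun measurableSet_Ioi fun s hs ↦
          lintegral_moment_integrand ((h_tail k).trans hs), lintegral_Ioi_moment (h_tail k)]
    _ = ENNReal.ofReal (log (4 / π)) := by
        rw [← ENNReal.ofReal_tsum_of_nonneg (fun k ↦ momentTail_nonneg (h_tail k))
          hasSum_momentTail_two_mul.summable, hasSum_momentTail_two_mul.tsum_eq]

end Sondow

open Sondow in
theorem sondow_log_four_div_pi :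
    Real.log (4 / Real.pi)
      = ∫ x in Set.Ioo (0:ℝ) 1, ∫ y in Set.Ioo (0:ℝ) 1,
          (1 - x) / ((1 + x * y) * (-Real.log (x * y))) ∂volume ∂volume := by
  refine (integral_integral_eq_of_lintegral_lintegral_ofReal (by fun_prop) ?_
    (log_nonneg ?_) lintegral_sondow_integrand).symm
  · refine (ae_restrict_mem measurableSet_Ioo).mono fun x hx ↦
      (ae_restrict_mem measurableSet_Ioo).mono fun y hy ↦ ?_
    have : log (x * y) ≤ 0 := log_nonpos (mul_pos hx.1 hy.1).le
      (mul_le_one₀ hx.2.le hy.1.le hy.2.le)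
    have : 0 ≤ 1 - x := by linarith [hx.2]
    have : 0 < x * y := mul_pos hx.1 hy.1
    have : 0 ≤ -log (x * y) := by linarith
    positivity
  · rw [le_div_iff₀ pi_pos]
    linarith [pi_le_four]
end
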